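/- arXiv:1706.09969 — 5 statements merged into one kernel-verified Lean document; each statement's English description precedes it below -/
import Mathlib

section
/- If w_1 and w_2 are words in {1',1,2',2} whose lattice walks (from the origin) both end on the x-axis, at (x_1,0) and (x_2,0) respectively, then the lattice walk of the concatenation w_1 w_2 ends at (x_1 + x_2, 0). -/
inductive SLetter : Type
  | one' : SLetter
  | one : SLetter
  | two' : SLetter
  | two : SLetter
  deriving DecidableEq

open SLetter

/-- One step of the lattice walk: from position `p`, the letter `l` moves as follows.
On the axes (`p.1 = 0` or `p.2 = 0`), `1'` and `1` step east while `2'` and `2` step north;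
off the axes, `1'` steps east, `1` south, `2'` west, and `2` north. -/
def walkStep (p : ℤ × ℤ) (l : SLetter) : ℤ × ℤ :=
  if p.1 = 0 ∨ p.2 = 0 then
    match l with
    | one' | one => (p.1 + 1, p.2)
    | two' | two => (p.1, p.2 + 1)
  else
    match l with
    | one' => (p.1 + 1, p.2)
    | one => (p.1, p.2 - 1)
    | two' => (p.1 - 1, p.2)
    | two => (p.1, p.2 + 1)

/-- The endpoint of the lattice walk of the word `w` started at `p`. -/
def walk (p : ℤ × ℤ) (w : List SLetter) : ℤ × ℤ :=
  w.foldl walkStep p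

lemma walkStep_inv (a : ℤ) (l : SLetter) (p q : ℤ × ℤ) (k : ℤ)
    (hp1 : 0 ≤ p.1) (hp2 : 0 ≤ p.2) (hk0 : 0 ≤ k) (hka : k ≤ a)
    (hq1 : q.1 = p.1 + k) (hq2 : q.2 = p.2 + k - a) (hq2' : 0 ≤ q.2) :
    ∃ k', 0 ≤ k' ∧ k' ≤ a ∧ 0 ≤ (walkStep p l).1 ∧ 0 ≤ (walkStep p l).2 ∧
      (walkStep q l).1 = (walkStep p l).1 + k' ∧
      (walkStep q l).2 = (walkStep p l).2 + k' - a ∧ 0 ≤ (walkStep q l).2 := by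
  obtain ⟨x, y⟩ := p
  obtain ⟨u, v⟩ := q
  simp only at hp1 hp2 hq1 hq2 hq2' ⊢
  cases l <;> simp only [walkStep] <;> split_ifs <;>
    first
      | exact ⟨k, by omega⟩
      | exact ⟨k - 1, by omega⟩
      | exact ⟨k + 1, by omega⟩

lemma walk_inv (a : ℤ) (w : List SLetter) :
    ∀ (p q : ℤ × ℤ) (k : ℤ),
    0 ≤ p.1 → 0 ≤ p.2 → 0 ≤ k → k ≤ a →
    q.1 = p.1 + k → q.2 = p.2 + k - a → 0 ≤ q.2 →
    ∃ k', 0 ≤ k' ∧ k' ≤ a ∧ 0 ≤ (walk p w).1 ∧ 0 ≤ (walk p w).2 ∧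
      (walk q w).1 = (walk p w).1 + k' ∧
      (walk q w).2 = (walk p w).2 + k' - a ∧ 0 ≤ (walk q w).2 := by
  induction w with
  | nil =>
    intro p q k hp1 hp2 hk0 hka hq1 hq2 hq2'
    exact ⟨k, hk0, hka, hp1, hp2, hq1, hq2, hq2'⟩
  | cons l w ih =>
    intro p q k hp1 hp2 hk0 hka hq1 hq2 hq2'
    obtain ⟨k', h1, h2, h3, h4, h5, h6, h7⟩ :=
      walkStep_inv a l p q k hp1 hp2 hk0 hka hq1 hq2 hq2'
    exact ih (walkStep p l) (walkStep q l) k' h3 h4 h1 h2 h5 h6 h7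

/-- If the walks of `w₁` and `w₂` end at `(x₁, 0)` and `(x₂, 0)`, then the walk of the
concatenation `w₁ ++ w₂` ends at `(x₁ + x₂, 0)`: a concatenation of ballot words is ballot. -/
theorem stmt_7 (w₁ w₂ : List SLetter) (x₁ x₂ : ℤ)
    (h₁ : walk (0, 0) w₁ = (x₁, 0)) (h₂ : walk (0, 0) w₂ = (x₂, 0)) :
    walk (0, 0) (w₁ ++ w₂) = (x₁ + x₂, 0) := by
  -- First, `x₁ ≥ 0`: the walk from the origin stays in the first quadrant.
  have hx₁ : 0 ≤ x₁ := by
    obtain ⟨k', _, _, h3, _, _, _, _⟩ :=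
      walk_inv 0 w₁ (0, 0) (0, 0) 0 le_rfl le_rfl le_rfl le_rfl (by simp) (by simp) le_rfl
    rw [h₁] at h3
    exact h3
  -- Apply the invariant with `a = x₁`, `p` the walk of `w₂` from the origin and
  -- `q` the walk of `w₂` from `(x₁, 0)`.
  have hsplit : walk (0, 0) (w₁ ++ w₂) = walk (x₁, 0) w₂ := by
    show List.foldl walkStep (0,0) (w₁ ++ w₂) = _
    rw [List.foldl_append]
    show walk (walk (0,0) w₁) w₂ = _
    rw [h₁]
  obtain ⟨k', hk0, hka, _, _, h5, h6, h7⟩ :=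
    walk_inv x₁ w₂ (0, 0) (x₁, 0) x₁ le_rfl le_rfl hx₁ le_rfl (by simp) (by simp) le_rfl
  rw [h₂] at h5 h6
  simp only at h5 h6
  rw [hsplit, Prod.ext_iff]
  constructor <;> simp only <;> omega
end

section
/- Let w be a word in {1',1,2',2} starting at a position (x_k, y_k) with x_k ≥ 1 and (x_k,y_k) ≠ (1,0), such that when the walk of w is started from (x_k - 1, y_k + 1) instead, every position along the walk is the (-1,+1)-shift of the corresponding position of the original walk. Then the walk of w from (x_k, y_k) contains no step from position (1, y) with y ≥ 1 given by letter 1 going south or letter 2' going west (i.e., no type-5F configuration occurs along the walk). -/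
open SLetter

/-- If the walk of `w` started at `p` (with `p.1 ≥ 1`, `p ≠ (1,0)`) shifts uniformly by
`(-1, +1)` when the start is shifted by `(-1, +1)`, then no type-5F configuration occurs:
no letter `1` or `2'` is read at a position with `x = 1` and `y ≥ 1`. -/
theorem stmt_8 (w : List SLetter) (p : ℤ × ℤ)
    (hx : 1 ≤ p.1) (hy : 0 ≤ p.2) (hp : p ≠ (1, 0))
    (hshift : ∀ i ≤ w.length,
      walk (p + (-1, 1)) (w.take i) = walk p (w.take i) + (-1, 1)) :
    ∀ i < w.length, ¬ ((walk p (w.take i)).1 = 1 ∧ 1 ≤ (walk p (w.take i)).2 ∧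
      (w.getD i SLetter.one = SLetter.one ∨ w.getD i SLetter.one = SLetter.two')) := by
  rintro i hi ⟨hq1, hq2, hl⟩
  set q := walk p (w.take i) with hqdef
  have h1 := hshift i hi.le
  have h2 := hshift (i + 1) hi
  have hget : w.take (i + 1) = w.take i ++ [w.getD i SLetter.one] := by
    rw [List.take_succ]
    congr
    rw [List.getD_eq_getElem?_getD, List.getElem?_eq_getElem hi]
    rfl
  rw [hget] at h2
  simp only [walk, List.foldl_append, List.foldl_cons, List.foldl_nil] at h2
  rw [show (w.take i).foldl walkStep (p + (-1, 1)) = q + (-1, 1) from h1,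
    show (w.take i).foldl walkStep p = q from rfl] at h2
  have hs1 : (q + (-1, 1)).1 = 0 := by
    simp [Prod.fst_add]; omega
  have hne1 : ¬ (q.1 = 0 ∨ q.2 = 0) := by push_neg; omega
  rcases hl with hl | hl <;> rw [hl] at h2 <;>
    simp only [walkStep, hs1, true_or, if_true, if_pos (Or.inl hs1), if_neg hne1,
      Prod.ext_iff, Prod.fst_add, Prod.snd_add] at h2 <;> omega
end

section
/- Let w be a word in {1',1,2',2} in canonical form such that w is ballot, meaning its lattice walk ends on the x-axis. Then E'(w) is undefined, where E'(w) is the unique word (if any) with the same standardization as w and weight wt(w) + (1,-1). -/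
open SLetter

/-- Rank of a letter in the order `1' < 1 < 2' < 2`. -/
def rank : SLetter → ℕ
  | one' => 0
  | one => 1
  | two' => 2
  | two => 3

/-- Whether a letter is primed. -/
def primed : SLetter → Bool
  | one' => true
  | two' => true
  | _ => false

/-- Number of `1`-valued letters (`1` or `1'`) of `w`. -/
def wt1 (w : List SLetter) : ℕ :=
  (w.filter fun l => decide (l = one ∨ l = one')).length

/-- Number of `2`-valued letters (`2` or `2'`) of `w`. -/
def wt2 (w : List SLetter) : ℕ :=
  (w.filter fun l => decide (l = two ∨ l = two')).length

/-- The standardization of `w`: position `j` receives the number of positions `j'` whose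
letter is smaller, ties among equal unprimed letters broken left-to-right and ties among
equal primed letters broken right-to-left.  (Numbers here start from `0` rather than `1`.) -/
def stdList (w : List SLetter) : List ℕ :=
  (List.range w.length).map fun j =>
    ((List.range w.length).filter fun j' =>
      decide (rank (w.getD j' one) < rank (w.getD j one) ∨
        (rank (w.getD j' one) = rank (w.getD j one) ∧
          (if primed (w.getD j one) then j < j' else j' < j)))).length

/-- Canonicalization: unprime the first letter of each numerical value.
The booleans record whether a `1`-valued (resp. `2`-valued) letter has been seen. -/
def canonAux : Bool → Bool → List SLetter → List SLetter
  | _, _, [] => []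
  | s1, s2, one' :: ls => (if s1 then one' else one) :: canonAux true s2 ls
  | _, s2, one :: ls => one :: canonAux true s2 ls
  | s1, s2, two' :: ls => (if s2 then two' else two) :: canonAux s1 true ls
  | s1, _, two :: ls => two :: canonAux s1 true ls

/-- The canonical form of a word. -/
def canonize (w : List SLetter) : List SLetter := canonAux false false w

/-- A word is in canonical form if the first letter of each numerical value is unprimed. -/
def IsCanonical (w : List SLetter) : Prop := canonize w = w

-- test aux lemmas
section Aux
open SLetter

def LtIdx (u : List SLetter) (j' j : ℕ) : Prop :=
  rank (u.getD j' one) < rank (u.getD j one) ∨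
    (rank (u.getD j' one) = rank (u.getD j one) ∧
      (if primed (u.getD j one) then j < j' else j' < j))

instance (u : List SLetter) (j' j : ℕ) : Decidable (LtIdx u j' j) := by
  unfold LtIdx; infer_instance

lemma rank_inj : ∀ a b : SLetter, rank a = rank b → a = b := by
  intro a b; cases a <;> cases b <;> simp [rank]

lemma length_stdList (u : List SLetter) : (stdList u).length = u.length := by
  simp [stdList]

lemma stdList_getD (u : List SLetter) (j : ℕ) (hj : j < u.length) :
    (stdList u).getD j 0 =
      ((List.range u.length).filter fun j' => decide (LtIdx u j' j)).length := by
  unfold stdList LtIdx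
  rw [List.getD_eq_getElem _ _ (by simpa [stdList] using hj)]
  simp

lemma filterLen (n : ℕ) (P : ℕ → Prop) [DecidablePred P] :
    ((List.range n).filter fun j => decide (P j)).length = ((Finset.range n).filter P).card := by
  rfl

end Aux
section Aux2
open SLetter

lemma ltIdx_irrefl (u : List SLetter) (j : ℕ) : ¬ LtIdx u j j := by
  intro h
  rcases h with h | ⟨_, h⟩
  · exact lt_irrefl _ h
  · split at h <;> omega

lemma ltIdx_trans {u : List SLetter} {a b c : ℕ} :
    LtIdx u a b → LtIdx u b c → LtIdx u a c := by
  intro h1 h2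
  rcases h1 with h1 | ⟨e1, h1⟩ <;> rcases h2 with h2 | ⟨e2, h2⟩
  · exact Or.inl (lt_trans h1 h2)
  · exact Or.inl (e2 ▸ h1)
  · exact Or.inl (e1 ▸ h2)
  · refine Or.inr ⟨e1.trans e2, ?_⟩
    have hbc : u.getD b one = u.getD c one := rank_inj _ _ e2
    rw [hbc] at h1
    split_ifs at h1 h2 ⊢ <;> omega

lemma ltIdx_total {u : List SLetter} {a b : ℕ} (h : a ≠ b) :
    LtIdx u a b ∨ LtIdx u b a := by
  rcases lt_trichotomy (rank (u.getD a one)) (rank (u.getD b one)) with h1 | h1 | h1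
  · exact Or.inl (Or.inl h1)
  · have he : u.getD a one = u.getD b one := rank_inj _ _ h1
    unfold LtIdx
    rw [he]
    split_ifs <;> omega
  · exact Or.inr (Or.inl h1)

def stdF (u : List SLetter) (j : ℕ) : Finset ℕ :=
  (Finset.range u.length).filter (fun j' => LtIdx u j' j)

lemma stdList_getD_card (u : List SLetter) (j : ℕ) (hj : j < u.length) :
    (stdList u).getD j 0 = (stdF u j).card := by
  rw [stdList_getD u j hj]; exact filterLen _ _

lemma stdF_lt {u : List SLetter} {j j' : ℕ} (hj : j < u.length) (hj' : j' < u.length)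
    (h : LtIdx u j' j) : (stdF u j').card < (stdF u j).card := by
  apply Finset.card_lt_card
  rw [Finset.ssubset_def]
  constructor
  · intro k hk
    rw [stdF, Finset.mem_filter] at hk ⊢
    exact ⟨hk.1, ltIdx_trans hk.2 h⟩
  · intro hsub
    have hmem : j' ∈ stdF u j := by
      rw [stdF, Finset.mem_filter]; exact ⟨Finset.mem_range.mpr hj', h⟩
    have := hsub hmem
    rw [stdF, Finset.mem_filter] at this
    exact ltIdx_irrefl u j' this.2

lemma stdF_iff {u : List SLetter} {j j' : ℕ} (hj : j < u.length) (hj' : j' < u.length) :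
    LtIdx u j' j ↔ (stdF u j').card < (stdF u j).card := by
  constructor
  · exact stdF_lt hj hj'
  · intro hc
    rcases eq_or_ne j' j with rfl | hne
    · exact absurd hc (lt_irrefl _)
    · rcases ltIdx_total hne with h | h
      · exact h
      · exact absurd (stdF_lt hj' hj h) (by omega)

end Aux2
section Aux3
open SLetter

lemma card_filter_getD (u : List SLetter) (p : SLetter → Bool) :
    ((Finset.range u.length).filter (fun j => p (u.getD j one) = true)).card
      = (u.filter p).length := by
  induction u using List.reverseRecOn with
  | nil => simp
  | append_singleton u a ih =>
    have hrw : (Finset.range u.length).filter (fun j => p ((u ++ [a]).getD j one) = true)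
        = (Finset.range u.length).filter (fun j => p (u.getD j one) = true) := by
      apply Finset.filter_congr
      intro j hj
      rw [List.getD_append _ _ _ _ (Finset.mem_range.mp hj)]
    have hlast : (u ++ [a]).getD u.length one = a := by
      rw [List.getD_append_right _ _ _ _ (le_refl _)]
      simp
    rw [List.length_append, List.length_singleton, Finset.range_add_one, Finset.filter_insert,
      hlast, List.filter_append]
    by_cases hpa : p a = true
    · rw [if_pos hpa, Finset.card_insert_of_notMem (by simp), hrw, ih]
      simp [hpa]
    · rw [if_neg hpa, hrw, ih]
      simp [hpa]

def oneSet (u : List SLetter) : Finset ℕ :=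
  (Finset.range u.length).filter (fun j => rank (u.getD j one) ≤ 1)

lemma card_oneSet (u : List SLetter) : (oneSet u).card = wt1 u := by
  have h : oneSet u = (Finset.range u.length).filter
      (fun j => (decide (u.getD j one = one ∨ u.getD j one = one')) = true) := by
    apply Finset.filter_congr
    intro j _
    have : ∀ l : SLetter, (rank l ≤ 1) ↔ (decide (l = one ∨ l = one') = true) := by
      intro l; cases l <;> simp [rank]
    simp only [this]
  rw [h]
  exact card_filter_getD u (fun l => decide (l = one ∨ l = one'))

end Aux3
section Aux4
open SLetter

lemma walk_cons (p : ℤ × ℤ) (l : SLetter) (t : List SLetter) :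
    walk p (l :: t) = walk (walkStep p l) t := rfl

lemma walk_append (p : ℤ × ℤ) (a b : List SLetter) :
    walk p (a ++ b) = walk (walk p a) b := List.foldl_append

lemma walkStep_y_nonneg (p : ℤ × ℤ) (l : SLetter) (h : 0 ≤ p.2) :
    0 ≤ (walkStep p l).2 := by
  unfold walkStep
  split
  · cases l <;> simp <;> omega
  · rename_i hax
    push_neg at hax
    cases l <;> simp <;> omega

lemma walk_y_nonneg (u : List SLetter) (p : ℤ × ℤ) (h : 0 ≤ p.2) :
    0 ≤ (walk p u).2 := by
  induction u generalizing p with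
  | nil => exact h
  | cons l t ih => exact ih _ (walkStep_y_nonneg p l h)

lemma walkStep_y_mono (p : ℤ × ℤ) (l : SLetter) (h : l ≠ one) :
    p.2 ≤ (walkStep p l).2 := by
  unfold walkStep
  split <;> cases l <;> simp_all <;> omega

lemma walk_y_mono (u : List SLetter) (p : ℤ × ℤ) (h : ∀ l ∈ u, l ≠ one) :
    p.2 ≤ (walk p u).2 := by
  induction u generalizing p with
  | nil => exact le_refl _
  | cons l t ih =>
    calc p.2 ≤ (walkStep p l).2 := walkStep_y_mono p l (h l (by simp))
    _ ≤ (walk (walkStep p l) t).2 := ih _ (fun x hx => h x (by simp [hx]))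

lemma walkStep_two (p : ℤ × ℤ) (l : SLetter) (h : 2 ≤ rank l) (h0 : 0 ≤ p.2) :
    1 ≤ (walkStep p l).2 := by
  unfold walkStep
  split
  · cases l <;> simp [rank] at h ⊢ <;> omega
  · rename_i hax
    push_neg at hax
    cases l <;> simp [rank] at h ⊢ <;> omega

lemma walk_allTwo (u : List SLetter) (q : ℤ × ℤ) (hx : q.1 = 0)
    (h : ∀ l ∈ u, 2 ≤ rank l) : walk q u = (0, q.2 + u.length) := by
  induction u generalizing q with
  | nil => simp only [walk, List.foldl_nil, List.length_nil, Nat.cast_zero, add_zero]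
           exact Prod.ext hx rfl
  | cons l t ih =>
    have h2 : 2 ≤ rank l := h l (by simp)
    have hstep : walkStep q l = (0, q.2 + 1) := by
      unfold walkStep
      rw [if_pos (Or.inl hx)]
      cases l <;> simp [rank] at h2 ⊢ <;> exact hx
    rw [walk_cons, hstep, ih (0, q.2 + 1) rfl (fun x hx => h x (by simp [hx]))]
    simp
    push_cast
    ring

end Aux4
/-- If `w` is ballot (its lattice walk ends on the `x`-axis), then `E'(w)` is undefined:
there is no word with the same standardization as `w` and weight `wt(w) + (1, -1)`. -/
theorem stmt_12 (w : List SLetter) (hw : IsCanonical w)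
    (hballot : (walk (0, 0) w).2 = 0) :
    ¬ ∃ v, IsCanonical v ∧ stdList v = stdList w ∧
      wt1 v = wt1 w + 1 ∧ wt2 v + 1 = wt2 w := by
  rintro ⟨v, -, hstd, hwt1, -⟩
  have hlen : v.length = w.length := by
    have := congrArg List.length hstd
    simpa [length_stdList] using this
  set n := w.length with hn
  -- order equivalence
  have E : ∀ j j' : ℕ, j < n → j' < n → (LtIdx v j' j ↔ LtIdx w j' j) := by
    intro j j' hj hj'
    have hcard : ∀ k : ℕ, k < n → (stdF v k).card = (stdF w k).card := by
      intro k hk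
      rw [← stdList_getD_card v k (by omega), ← stdList_getD_card w k hk, hstd]
    rw [stdF_iff (u := v) (by omega) (by omega), stdF_iff (u := w) hj hj',
      hcard j hj, hcard j' hj']
  -- one-valued index sets
  have hsub : oneSet w ⊆ oneSet v := by
    by_contra hns
    rw [Finset.not_subset] at hns
    obtain ⟨j, hjw, hjv⟩ := hns
    rw [oneSet, Finset.mem_filter, Finset.mem_range] at hjw
    have hjn : j < n := hjw.1
    have hjv2 : 2 ≤ rank (v.getD j one) := by
      by_contra hcon
      exact hjv (by rw [oneSet, Finset.mem_filter, Finset.mem_range, hlen]; exact ⟨hjn, by omega⟩)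
    have hsub2 : oneSet v ⊆ (oneSet w).erase j := by
      intro k hk
      rw [oneSet, Finset.mem_filter, Finset.mem_range, hlen] at hk
      have hkj : LtIdx v k j := Or.inl (by omega)
      have hkjw : LtIdx w k j := (E j k hjn hk.1).mp hkj
      have hkne : k ≠ j := by
        intro e; exact ltIdx_irrefl v j (e ▸ hkj)
      rw [Finset.mem_erase]
      refine ⟨hkne, ?_⟩
      rw [oneSet, Finset.mem_filter, Finset.mem_range]
      refine ⟨hk.1, ?_⟩
      rcases hkjw with h | ⟨h, _⟩ <;> omega
    have c1 : (oneSet v).card = wt1 w + 1 := by rw [card_oneSet, hwt1]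
    have c2 : (oneSet w).card = wt1 w := card_oneSet w
    have := Finset.card_le_card hsub2
    rw [Finset.card_erase_of_mem (by rw [oneSet, Finset.mem_filter, Finset.mem_range]; exact hjw), c1, c2] at this
    omega
  -- the extra element j0
  have hex : ∃ j0, j0 ∈ oneSet v ∧ j0 ∉ oneSet w := by
    by_contra hc
    push_neg at hc
    have : oneSet v ⊆ oneSet w := fun k hk => hc k hk
    have := Finset.card_le_card this
    rw [card_oneSet, card_oneSet, hwt1] at this
    omega
  obtain ⟨j0, hj0v, hj0w⟩ := hex
  have hj0n : j0 < n := by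
    have := (Finset.mem_filter.mp hj0v).1
    rw [Finset.mem_range, hlen] at this
    exact this
  have hj0v1 : rank (v.getD j0 one) ≤ 1 := (Finset.mem_filter.mp hj0v).2
  have hj0w2 : 2 ≤ rank (w.getD j0 one) := by
    by_contra hc
    exact hj0w (by rw [oneSet, Finset.mem_filter, Finset.mem_range]; exact ⟨hj0n, by omega⟩)
  -- structural fact S1
  have S1 : ∀ j k : ℕ, j0 < j → j < n → w.getD j one = one → k < j → k < n →
      ¬ (rank (w.getD k one) ≤ 1) := by
    intro j k hj0j hjn hwj hkj hkn hwk
    have hjn' : j ∈ oneSet w := by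
      rw [oneSet, Finset.mem_filter, Finset.mem_range, hwj]
      exact ⟨hjn, by norm_num [rank]⟩
    have hvj1 : rank (v.getD j one) ≤ 1 := (Finset.mem_filter.mp (hsub hjn')).2
    have hkn' : k ∈ oneSet w := by
      rw [oneSet, Finset.mem_filter, Finset.mem_range]; exact ⟨hkn, hwk⟩
    have hvk1 : rank (v.getD k one) ≤ 1 := (Finset.mem_filter.mp (hsub hkn')).2
    have hr1 : rank (w.getD j one) = 1 := by rw [hwj]; rfl
    have hpone : primed one = false := rfl
    -- Lt w k j
    have hLwkj : LtIdx w k j := by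
      rcases Nat.lt_or_ge (rank (w.getD k one)) (rank (w.getD j one)) with h | h
      · exact Or.inl h
      · refine Or.inr ⟨by omega, ?_⟩
        rw [hwj, hpone]
        simpa using hkj
    have hLvkj : LtIdx v k j := (E j k hjn hkn).mpr hLwkj
    -- derive rank v_j = 1
    have hvj : rank (v.getD j one) = 1 := by
      rcases hLvkj with h | ⟨he, hi⟩
      · omega
      · split_ifs at hi with hp
        · omega
        · -- unprimed and rank ≤ 1 means `one`
          cases hv : v.getD j one
          · rw [hv] at hp; simp [primed] at hp
          · rfl
          · rw [hv] at hvj1; simp [rank] at hvj1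
          · rw [hv] at hvj1; simp [rank] at hvj1
    -- Lt w j j0 transfers
    have hLwjj0 : LtIdx w j j0 := Or.inl (by omega)
    have hLvjj0 : LtIdx v j j0 := (E j0 j hj0n hjn).mpr hLwjj0
    rcases hLvjj0 with h | ⟨he, hi⟩
    · omega
    · have hvj0 : v.getD j0 one = one := rank_inj _ one (by rw [← he, hvj]; rfl)
      rw [hvj0, hpone] at hi
      simp at hi
      omega
  -- now the walk argument
  by_cases hP : ∃ j, j0 < j ∧ j < n ∧ w.getD j one = one
  · -- Case II
    obtain ⟨f, hf1, hf2, hf3⟩ := hP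
    have hb : ∀ l ∈ w.take f, 2 ≤ rank l := by
      intro l hl
      obtain ⟨i, hi, rfl⟩ := List.mem_iff_getElem.mp hl
      have hif : i < f := by
        have := hi; rw [List.length_take] at this; omega
      have hin : i < n := by
        have := hi; rw [List.length_take] at this; omega
      have : (w.take f)[i] = w.getD i one := by
        rw [List.getElem_take, List.getD_eq_getElem w one hin]
      rw [this]
      by_contra hc
      exact S1 f i hf1 hf2 hf3 hif hin (by omega)
    have hwalkb : walk (0, 0) (w.take f) = (0, (f : ℤ)) := by
      rw [walk_allTwo (w.take f) (0,0) rfl hb]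
      simp [List.length_take]
      omega
    have hdrop : w.drop f = w.getD f one :: w.drop (f + 1) := by
      rw [List.getD_eq_getElem w one (by omega)]
      exact List.drop_eq_getElem_cons (by omega)
    have hstep : walkStep (0, (f : ℤ)) one = (1, (f : ℤ)) := by
      unfold walkStep
      rw [if_pos (Or.inl rfl)]
      simp
    have hnone : ∀ l ∈ w.drop (f + 1), l ≠ one := by
      intro l hl
      obtain ⟨i, hi, rfl⟩ := List.mem_iff_getElem.mp hl
      rw [List.getElem_drop]
      intro hone
      have hlt : f + 1 + i < n := by rw [List.length_drop] at hi; omega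
      have hgd : w.getD (f + 1 + i) one = one := by
        rw [List.getD_eq_getElem w one hlt]; exact hone
      exact S1 (f + 1 + i) f (by omega) hlt hgd (by omega) (by omega)
        (by rw [hf3]; exact Nat.le_refl 1)
    have hw1 : walk (0, 0) w = walk (1, (f : ℤ)) (w.drop (f + 1)) := by
      conv_lhs => rw [← List.take_append_drop f w]
      rw [walk_append, hwalkb, hdrop, hf3, walk_cons, hstep]
    have hfinal : (f : ℤ) ≤ (walk (0, 0) w).2 := by
      rw [hw1]
      have := walk_y_mono (w.drop (f + 1)) (1, (f : ℤ)) hnone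
      simpa using this
    rw [hballot] at hfinal
    omega
  · -- Case I
    push_neg at hP
    have h0 : (0 : ℤ) ≤ (walk (0, 0) (w.take j0)).2 := walk_y_nonneg _ _ (by norm_num)
    have hdrop : w.drop j0 = w.getD j0 one :: w.drop (j0 + 1) := by
      rw [List.getD_eq_getElem w one (by omega)]
      exact List.drop_eq_getElem_cons (by omega)
    have h1 : 1 ≤ (walkStep (walk (0, 0) (w.take j0)) (w.getD j0 one)).2 :=
      walkStep_two _ _ hj0w2 h0
    have hnone : ∀ l ∈ w.drop (j0 + 1), l ≠ one := by
      intro l hl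
      obtain ⟨i, hi, rfl⟩ := List.mem_iff_getElem.mp hl
      rw [List.getElem_drop]
      intro hone
      have hlt : j0 + 1 + i < n := by rw [List.length_drop] at hi; omega
      exact hP (j0 + 1 + i) (by omega) hlt
        (by rw [List.getD_eq_getElem w one hlt]; exact hone)
    have hw1 : walk (0, 0) w
        = walk (walkStep (walk (0, 0) (w.take j0)) (w.getD j0 one)) (w.drop (j0 + 1)) := by
      conv_lhs => rw [← List.take_append_drop j0 w]
      rw [walk_append, hdrop, walk_cons]
    have hfinal : 1 ≤ (walk (0, 0) w).2 := by
      rw [hw1]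
      exact le_trans h1 (walk_y_mono _ _ hnone)
    rw [hballot] at hfinal
    omega
end

section
/- For a word w in {1',1,2',2} in canonical form with at least one 1-valued letter and one 2-valued letter: the maximal chain of the operator F' through w has length greater than 1 if and only if the lattice walk of w contains no south or west steps (equivalently, every step is east or north). -/
open SLetter

/-- The `i`-th step (as a direction vector) of the lattice walk of `w` from the origin. -/
def stepAt (w : List SLetter) (i : ℕ) : ℤ × ℤ :=
  walk (0, 0) (w.take (i + 1)) - walk (0, 0) (w.take i)

/-- The primed lowering operator `F'`: the unique (canonical) word with the same
standardization as `w` and weight `wt w + (-1, +1)`, if it exists. -/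
noncomputable def Fprime (w : List SLetter) : Option (List SLetter) := by
  classical
  exact if h : ∃ v, IsCanonical v ∧ stdList v = stdList w ∧
      wt1 v + 1 = wt1 w ∧ wt2 v = wt2 w + 1 then some h.choose else none

/-- The primed raising operator `E'`: the unique (canonical) word with the same
standardization as `w` and weight `wt w + (+1, -1)`, if it exists. -/
noncomputable def Eprime (w : List SLetter) : Option (List SLetter) := by
  classical
  exact if h : ∃ v, IsCanonical v ∧ stdList v = stdList w ∧
      wt1 v = wt1 w + 1 ∧ wt2 v + 1 = wt2 w then some h.choose else none

-- ===== auxiliary development =====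
section Aux

/-- whether a letter is 1-valued -/
def isOne : SLetter → Bool
  | one' => true
  | one => true
  | _ => false

/-- letter of `w` at position `i` -/
def La (w : List SLetter) (i : ℕ) : SLetter := w.getD i one

/-- the pair comparator: for `i < j`, position `i` comes before `j` in the
standardization order iff `relB (La w i) (La w j)` -/
def relB (a b : SLetter) : Bool := if isOne a then !(b == one') else (b == two)

/-- numeric sorting key -/
def key (w : List SLetter) (i : ℕ) : ℕ :=
  4 * w.length * rank (La w i) + (if primed (La w i) then w.length - i else w.length + i)

/-- comparator agreement -/
def Agr (w v : List SLetter) : Prop :=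
  w.length = v.length ∧
  ∀ i j, i < j → j < w.length → relB (La w i) (La w j) = relB (La v i) (La v j)

lemma key_lt_iff_pred (w : List SLetter) (i j : ℕ) (hi : i < w.length) (hj : j < w.length) :
    (rank (w.getD i one) < rank (w.getD j one) ∨
        (rank (w.getD i one) = rank (w.getD j one) ∧
          (if primed (w.getD j one) then j < i else i < j))) ↔ key w i < key w j := by
  unfold key La
  rcases h : w.getD i one with _|_|_|_ <;> rcases h' : w.getD j one with _|_|_|_ <;>
    simp [rank, primed] <;> omega

lemma key_inj (w : List SLetter) (i j : ℕ) (hi : i < w.length) (hj : j < w.length)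
    (h : key w i = key w j) : i = j := by
  unfold key La at h
  rcases h1 : w.getD i one with _|_|_|_ <;> rcases h2 : w.getD j one with _|_|_|_ <;>
    rw [h1, h2] at h <;> simp [rank, primed] at h <;> omega

/-- count of positions before `j` in the order -/
noncomputable def cnt (w : List SLetter) (j : ℕ) : ℕ :=
  ((Finset.range w.length).filter fun i => key w i < key w j).card

lemma list_filter_length_eq_card (p : ℕ → Bool) (n : ℕ) :
    ((List.range n).filter p).length = ((Finset.range n).filter (fun i => p i = true)).card := by
  induction n with
  | zero => simp
  | succ n ih =>
    rw [List.range_succ, List.filter_append, List.length_append, ih, Finset.range_add_one,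
      Finset.filter_insert]
    by_cases h : p n = true
    · rw [if_pos h, Finset.card_insert_of_notMem (by simp), List.filter_cons, if_pos h]
      simp
    · rw [if_neg h, List.filter_cons, if_neg h]
      simp

lemma stdList_entry (w : List SLetter) (j : ℕ) (hj : j < w.length) :
    ((List.range w.length).filter fun i =>
      decide (rank (w.getD i one) < rank (w.getD j one) ∨
        (rank (w.getD i one) = rank (w.getD j one) ∧
          (if primed (w.getD j one) then j < i else i < j)))).length = cnt w j := by
  rw [list_filter_length_eq_card]
  unfold cnt
  apply Finset.card_bij (fun a _ => a)
  · intro a ha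
    simp only [Finset.mem_filter, Finset.mem_range, decide_eq_true_eq] at ha ⊢
    exact ⟨ha.1, (key_lt_iff_pred w a j ha.1 hj).1 ha.2⟩
  · intro a ha b hb h; exact h
  · intro a ha
    simp only [Finset.mem_filter, Finset.mem_range, decide_eq_true_eq] at ha ⊢
    exact ⟨a, ⟨ha.1, (key_lt_iff_pred w a j ha.1 hj).2 ha.2⟩, rfl⟩

lemma stdList_eq_iff_cnt (w v : List SLetter) :
    stdList w = stdList v ↔ (w.length = v.length ∧ ∀ j < w.length, cnt w j = cnt v j) := by
  constructor
  · intro h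
    have hlen : w.length = v.length := by
      have := congrArg List.length h
      simpa [stdList] using this
    refine ⟨hlen, fun j hj => ?_⟩
    have h1 := congrArg (fun l => l.getD j 0) h
    simp only [stdList] at h1
    rw [List.getD_eq_getElem?_getD, List.getD_eq_getElem?_getD] at h1
    rw [List.getElem?_map, List.getElem?_map] at h1
    rw [List.getElem?_range hj, List.getElem?_range (hlen ▸ hj)] at h1
    simp only [Option.map_some, Option.getD_some] at h1
    rw [stdList_entry w j hj, stdList_entry v j (hlen ▸ hj)] at h1
    exact h1
  · rintro ⟨hlen, h⟩
    unfold stdList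
    rw [← hlen]
    apply List.map_congr_left
    intro j hj
    simp only [List.mem_range] at hj
    rw [stdList_entry w j hj]
    conv_rhs => rw [hlen]
    rw [stdList_entry v j (hlen ▸ hj)]
    exact h j hj

lemma cnt_mono (w : List SLetter) (i j : ℕ) (hi : i < w.length) (hj : j < w.length)
    (h : key w i < key w j) : cnt w i < cnt w j := by
  apply Finset.card_lt_card
  constructor
  · intro x hx
    simp only [Finset.mem_filter, Finset.mem_range] at hx ⊢
    exact ⟨hx.1, hx.2.trans h⟩
  · intro hsub
    have : i ∈ (Finset.range w.length).filter fun x => key w x < key w j := by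
      simp [Finset.mem_filter, hi, h]
    have h2 := hsub this
    simp only [Finset.mem_filter] at h2
    omega

lemma key_order_of_cnt (w v : List SLetter) (hlen : w.length = v.length)
    (h : ∀ j < w.length, cnt w j = cnt v j) :
    ∀ i j, i < w.length → j < w.length → (key w i < key w j ↔ key v i < key v j) := by
  intro i j hi hj
  constructor
  · intro hk
    have h1 : cnt v i < cnt v j := by
      rw [← h i hi, ← h j hj]; exact cnt_mono w i j hi hj hk
    rcases lt_trichotomy (key v i) (key v j) with h2 | h2 | h2
    · exact h2
    · exact absurd (key_inj v i j (hlen ▸ hi) (hlen ▸ hj) h2) (by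
        intro he; rw [he] at h1; omega)
    · exfalso
      have := cnt_mono v j i (hlen ▸ hj) (hlen ▸ hi) h2
      omega
  · intro hk
    have h1 : cnt w i < cnt w j := by
      rw [h i hi, h j hj]; exact cnt_mono v i j (hlen ▸ hi) (hlen ▸ hj) hk
    rcases lt_trichotomy (key w i) (key w j) with h2 | h2 | h2
    · exact h2
    · exact absurd (key_inj w i j hi hj h2) (by intro he; rw [he] at h1; omega)
    · exfalso
      have := cnt_mono w j i hj hi h2
      omega

lemma key_lt_iff_relB (w : List SLetter) (i j : ℕ) (hi : i < w.length) (hj : j < w.length)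
    (hij : i < j) : key w i < key w j ↔ relB (La w i) (La w j) = true := by
  unfold key relB La
  rcases h : w.getD i one with _|_|_|_ <;> rcases h' : w.getD j one with _|_|_|_ <;>
    simp [rank, primed, isOne] <;> omega

lemma stdList_eq_iff_Agr (w v : List SLetter) :
    stdList w = stdList v ↔ Agr w v := by
  rw [stdList_eq_iff_cnt]
  constructor
  · rintro ⟨hlen, h⟩
    refine ⟨hlen, fun i j hij hj => ?_⟩
    have hi : i < w.length := hij.trans hj
    have ko := key_order_of_cnt w v hlen h i j hi hj
    rw [key_lt_iff_relB w i j hi hj hij] at ko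
    rw [key_lt_iff_relB v i j (hlen ▸ hi) (hlen ▸ hj) hij] at ko
    rcases hb : relB (La w i) (La w j) with _ | _ <;>
      rcases hb' : relB (La v i) (La v j) with _ | _ <;> simp_all
  · rintro ⟨hlen, h⟩
    refine ⟨hlen, fun j hj => ?_⟩
    unfold cnt
    rw [← hlen]
    congr 1
    apply Finset.filter_congr
    intro i hi
    simp only [Finset.mem_range] at hi
    rcases lt_trichotomy i j with hij | hij | hij
    · have := h i j hij hj
      rw [key_lt_iff_relB w i j hi hj hij, key_lt_iff_relB v i j (hlen ▸ hi) (hlen ▸ hj) hij, this]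
    · subst hij; simp
    · -- i > j : key w i < key w j ↔ ¬ (key w j < key w i) given injectivity
      have hne : key w j ≠ key w i := fun he => by
        have := key_inj w j i hj hi he; omega
      have hne' : key v j ≠ key v i := fun he => by
        have := key_inj v j i (hlen ▸ hj) (hlen ▸ hi) he; omega
      have h2 : (key w j < key w i) ↔ (key v j < key v i) := by
        rw [key_lt_iff_relB w j i hj hi hij, key_lt_iff_relB v j i (hlen ▸ hj) (hlen ▸ hi) hij,
          h j i hij hi]
      constructor
      · intro hk
        by_contra hk2
        have : key v j < key v i := by omega
        rw [← h2] at this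
        omega
      · intro hk
        by_contra hk2
        have : key w j < key w i := by omega
        rw [h2] at this
        omega

end Aux
section Aux2

/-- positions of 1-valued letters -/
noncomputable def Ones (w : List SLetter) : Finset ℕ :=
  (Finset.range w.length).filter fun i => isOne (La w i) = true

/-- positions of 2-valued letters -/
noncomputable def Twos (w : List SLetter) : Finset ℕ :=
  (Finset.range w.length).filter fun i => isOne (La w i) = false

lemma filter_length_eq (p : SLetter → Bool) (w : List SLetter) :
    (w.filter p).length =
      ((List.range w.length).filter fun i => p (w.getD i one)).length := by
  induction w with
  | nil => simp
  | cons a w ih =>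
    rw [List.filter_cons, List.length_cons, List.range_succ_eq_map, List.filter_cons]
    simp only [List.getD_cons_zero, List.filter_map]
    have : ((List.range w.length).filter
        ((fun i => p ((a :: w).getD i one)) ∘ Nat.succ)) =
        ((List.range w.length).filter fun i => p (w.getD i one)) := by
      apply List.filter_congr
      intro i _
      simp [Function.comp, List.getD_cons_succ]
    rw [this]
    by_cases h : p a = true <;> simp [h, ih]

lemma wt1_eq_card (w : List SLetter) : wt1 w = (Ones w).card := by
  have hp : (fun l => decide (l = one ∨ l = one')) = isOne := by
    funext l; cases l <;> rfl
  rw [wt1, hp, filter_length_eq, Ones, list_filter_length_eq_card]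
  rfl

lemma wt2_eq_card (w : List SLetter) : wt2 w = (Twos w).card := by
  have hp : (fun l => decide (l = two ∨ l = two')) = (fun l => !(isOne l)) := by
    funext l; cases l <;> rfl
  rw [wt2, hp, filter_length_eq, Twos, list_filter_length_eq_card]
  apply congrArg
  apply Finset.filter_congr
  intro i _
  simp [La]

lemma mem_Ones (w : List SLetter) (i : ℕ) :
    i ∈ Ones w ↔ i < w.length ∧ isOne (La w i) = true := by
  simp [Ones]

lemma mem_Twos (w : List SLetter) (i : ℕ) :
    i ∈ Twos w ↔ i < w.length ∧ isOne (La w i) = false := by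
  simp [Twos]

/-- first 1-valued letter unprimed -/
def F1U (w : List SLetter) : Prop :=
  ∀ j < w.length, isOne (La w j) = true → (∀ i < j, isOne (La w i) = false) → La w j = one

/-- first 2-valued letter unprimed -/
def F2U (w : List SLetter) : Prop :=
  ∀ j < w.length, isOne (La w j) = false → (∀ i < j, isOne (La w i) = true) → La w j = two

lemma La_cons_succ (a : SLetter) (w : List SLetter) (i : ℕ) :
    La (a :: w) (i + 1) = La w i := by simp [La]

lemma La_cons_zero (a : SLetter) (w : List SLetter) :
    La (a :: w) 0 = a := by simp [La]

lemma F1U_cons_oneval (a : SLetter) (w : List SLetter) (ha : isOne a = true) :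
    F1U (a :: w) ↔ (a = one) := by
  constructor
  · intro h
    exact h 0 (by simp) (by simpa [La] using ha) (by omega)
  · intro h
    intro j hj h1 h2
    match j with
    | 0 => simpa [La] using h
    | j + 1 =>
      exfalso
      have := h2 0 (by omega)
      rw [La_cons_zero] at this
      rw [this] at ha
      exact Bool.noConfusion ha

lemma F1U_cons_twoval (a : SLetter) (w : List SLetter) (ha : isOne a = false) :
    F1U (a :: w) ↔ F1U w := by
  constructor
  · intro h j hj h1 h2
    have := h (j + 1) (by simpa using hj) (by rwa [La_cons_succ])
      (fun i hi => by
        match i with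
        | 0 => simpa [La_cons_zero]
        | i + 1 => rw [La_cons_succ]; exact h2 i (by omega))
    rwa [La_cons_succ] at this
  · intro h j hj h1 h2
    match j with
    | 0 => rw [La_cons_zero] at h1 ⊢; rw [h1] at ha; exact Bool.noConfusion ha
    | j + 1 =>
      rw [La_cons_succ] at h1 ⊢
      exact h j (by simpa using hj) h1 (fun i hi => by
        have := h2 (i + 1) (by omega)
        rwa [La_cons_succ] at this)

lemma F2U_cons_twoval (a : SLetter) (w : List SLetter) (ha : isOne a = false) :
    F2U (a :: w) ↔ (a = two) := by
  constructor
  · intro h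
    exact h 0 (by simp) (by simpa [La] using ha) (by omega)
  · intro h j hj h1 h2
    match j with
    | 0 => simpa [La] using h
    | j + 1 =>
      exfalso
      have := h2 0 (by omega)
      rw [La_cons_zero] at this
      rw [this] at ha
      exact Bool.noConfusion ha

lemma F2U_cons_oneval (a : SLetter) (w : List SLetter) (ha : isOne a = true) :
    F2U (a :: w) ↔ F2U w := by
  constructor
  · intro h j hj h1 h2
    have := h (j + 1) (by simpa using hj) (by rwa [La_cons_succ])
      (fun i hi => by
        match i with
        | 0 => simpa [La_cons_zero]
        | i + 1 => rw [La_cons_succ]; exact h2 i (by omega))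
    rwa [La_cons_succ] at this
  · intro h j hj h1 h2
    match j with
    | 0 => rw [La_cons_zero] at h1 ⊢; rw [h1] at ha; exact Bool.noConfusion ha
    | j + 1 =>
      rw [La_cons_succ] at h1 ⊢
      exact h j (by simpa using hj) h1 (fun i hi => by
        have := h2 (i + 1) (by omega)
        rwa [La_cons_succ] at this)

lemma canonAux_eq_iff (w : List SLetter) : ∀ s1 s2 : Bool,
    canonAux s1 s2 w = w ↔ ((s1 = false → F1U w) ∧ (s2 = false → F2U w)) := by
  induction w with
  | nil =>
    intro s1 s2
    simp [canonAux, F1U, F2U, La]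
  | cons a w ih =>
    intro s1 s2
    cases a with
    | one' =>
      have he : canonAux s1 s2 (one' :: w) =
        (if s1 then one' else one) :: canonAux true s2 w := rfl
      rw [he]
      cases s1 with
      | false =>
        constructor
        · intro h
          simp at h
        · rintro ⟨h1, _⟩
          have h1' := h1 rfl
          rw [F1U_cons_oneval one' w (by rfl)] at h1'
          simp at h1'
      | true =>
        have he2 : (if (true : Bool) then one' else one) = one' := rfl
        rw [he2]
        simp only [List.cons.injEq, true_and]
        rw [ih true s2]
        constructor
        · rintro ⟨_, h2⟩
          refine ⟨fun h => by simp at h, fun h => ?_⟩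
          rw [F2U_cons_oneval one' w (by rfl)]
          exact h2 h
        · rintro ⟨_, h2⟩
          refine ⟨fun h => by simp at h, fun h => ?_⟩
          have := h2 h
          rwa [F2U_cons_oneval one' w (by rfl)] at this
    | one =>
      have he : canonAux s1 s2 (one :: w) = one :: canonAux true s2 w := rfl
      rw [he]
      simp only [List.cons.injEq, true_and]
      rw [ih true s2]
      constructor
      · rintro ⟨_, h2⟩
        refine ⟨fun _ => ?_, fun h => ?_⟩
        · rw [F1U_cons_oneval one w (by rfl)]
        · rw [F2U_cons_oneval one w (by rfl)]
          exact h2 h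
      · rintro ⟨_, h2⟩
        refine ⟨fun h => by simp at h, fun h => ?_⟩
        have := h2 h
        rwa [F2U_cons_oneval one w (by rfl)] at this
    | two' =>
      have he : canonAux s1 s2 (two' :: w) =
        (if s2 then two' else two) :: canonAux s1 true w := rfl
      rw [he]
      cases s2 with
      | false =>
        constructor
        · intro h
          simp at h
        · rintro ⟨_, h2⟩
          have h2' := h2 rfl
          rw [F2U_cons_twoval two' w (by rfl)] at h2'
          simp at h2'
      | true =>
        have he2 : (if (true : Bool) then two' else two) = two' := rfl
        rw [he2]
        simp only [List.cons.injEq, true_and]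
        rw [ih s1 true]
        constructor
        · rintro ⟨h1, _⟩
          refine ⟨fun h => ?_, fun h => by simp at h⟩
          rw [F1U_cons_twoval two' w (by rfl)]
          exact h1 h
        · rintro ⟨h1, _⟩
          refine ⟨fun h => ?_, fun h => by simp at h⟩
          have := h1 h
          rwa [F1U_cons_twoval two' w (by rfl)] at this
    | two =>
      have he : canonAux s1 s2 (two :: w) = two :: canonAux s1 true w := rfl
      rw [he]
      simp only [List.cons.injEq, true_and]
      rw [ih s1 true]
      constructor
      · rintro ⟨h1, _⟩
        refine ⟨fun h => ?_, fun _ => ?_⟩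
        · rw [F1U_cons_twoval two w (by rfl)]
          exact h1 h
        · rw [F2U_cons_twoval two w (by rfl)]
      · rintro ⟨h1, _⟩
        refine ⟨fun h => ?_, fun h => by simp at h⟩
        have := h1 h
        rwa [F1U_cons_twoval two w (by rfl)] at this

lemma isCanonical_iff (w : List SLetter) : IsCanonical w ↔ (F1U w ∧ F2U w) := by
  rw [IsCanonical, canonize, canonAux_eq_iff]
  simp

end Aux2
section Aux3

/-- the "no south/west" shape condition -/
def ShapeP (w : List SLetter) : Prop :=
  ∀ k < w.length, (∃ i < k, isOne (La w i) = true) → (∃ j < k, isOne (La w j) = false) →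
    (La w k = one' ∨ La w k = two)

/-- counts in prefixes -/
noncomputable def c1 (w : List SLetter) (k : ℕ) : ℕ :=
  ((Finset.range k).filter fun i => isOne (La w i) = true).card
noncomputable def c2 (w : List SLetter) (k : ℕ) : ℕ :=
  ((Finset.range k).filter fun i => isOne (La w i) = false).card

lemma c1_succ (w : List SLetter) (k : ℕ) :
    c1 w (k + 1) = c1 w k + (if isOne (La w k) = true then 1 else 0) := by
  unfold c1
  rw [Finset.range_add_one, Finset.filter_insert]
  by_cases h : isOne (La w k) = true
  · rw [if_pos h, if_pos h, Finset.card_insert_of_notMem (by simp)]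
  · rw [if_neg h, if_neg h]
    omega

lemma c2_succ (w : List SLetter) (k : ℕ) :
    c2 w (k + 1) = c2 w k + (if isOne (La w k) = false then 1 else 0) := by
  unfold c2
  rw [Finset.range_add_one, Finset.filter_insert]
  by_cases h : isOne (La w k) = false
  · rw [if_pos h, if_pos h, Finset.card_insert_of_notMem (by simp)]
  · rw [if_neg h, if_neg h]
    omega

lemma c1_pos_iff (w : List SLetter) (k : ℕ) :
    0 < c1 w k ↔ ∃ i < k, isOne (La w i) = true := by
  unfold c1
  rw [Finset.card_pos, Finset.filter_nonempty_iff]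
  simp [Finset.mem_range]

lemma c2_pos_iff (w : List SLetter) (k : ℕ) :
    0 < c2 w k ↔ ∃ i < k, isOne (La w i) = false := by
  unfold c2
  rw [Finset.card_pos, Finset.filter_nonempty_iff]
  simp [Finset.mem_range]

lemma walk_take_succ (w : List SLetter) (k : ℕ) (hk : k < w.length) (p : ℤ × ℤ) :
    walk p (w.take (k + 1)) = walkStep (walk p (w.take k)) (La w k) := by
  rw [List.take_succ, walk, List.foldl_append]
  have : w[k]? = some (La w k) := by
    rw [List.getElem?_eq_getElem hk]
    simp [La, List.getD_eq_getElem?_getD, List.getElem?_eq_getElem hk]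
  rw [this]
  rfl

lemma prod_sub (a b c d : ℤ) : ((a, b) : ℤ × ℤ) - (c, d) = (a - c, b - d) := rfl

/-- invariant: Shape prefix gives position = weights and east/north steps -/
lemma shape_invariant (w : List SLetter) :
    ∀ k ≤ w.length, (∀ k' < k, k' < w.length →
        (∃ i < k', isOne (La w i) = true) → (∃ j < k', isOne (La w j) = false) →
        (La w k' = one' ∨ La w k' = two)) →
      walk (0, 0) (w.take k) = ((c1 w k : ℤ), (c2 w k : ℤ)) ∧
      (∀ i < k, stepAt w i = (1, 0) ∨ stepAt w i = (0, 1)) := by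
  intro k
  induction k with
  | zero => intro _ _; refine ⟨by simp [walk, c1, c2], by omega⟩
  | succ k ih =>
    intro hk hsh
    have hk' : k < w.length := by omega
    obtain ⟨hpos, hsteps⟩ := ih (by omega) (fun k' h1 h2 h3 h4 => hsh k' (by omega) h2 h3 h4)
    have hstep : walk (0,0) (w.take (k+1)) = walkStep ((c1 w k : ℤ), (c2 w k : ℤ)) (La w k) := by
      rw [walk_take_succ w k hk', hpos]
    have hs : stepAt w k =
        walkStep ((c1 w k : ℤ), (c2 w k : ℤ)) (La w k) - ((c1 w k : ℤ), (c2 w k : ℤ)) := by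
      unfold stepAt
      rw [walk_take_succ w k hk', hpos]
    have key : walk (0,0) (w.take (k+1)) = ((c1 w (k+1) : ℤ), (c2 w (k+1) : ℤ)) ∧
        (stepAt w k = (1,0) ∨ stepAt w k = (0,1)) := by
      by_cases hax : c1 w k = 0 ∨ c2 w k = 0
      · have haxZ : ((c1 w k : ℤ) = 0 ∨ (c2 w k : ℤ) = 0) := by
          rcases hax with h | h
          · left; exact_mod_cast h
          · right; exact_mod_cast h
        rcases hl : La w k with _|_|_|_ <;>
          rw [hl] at hstep hs <;>
          unfold walkStep at hstep hs <;>
          rw [if_pos haxZ] at hstep hs <;>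
          simp only at hstep hs <;>
          rw [c1_succ, c2_succ, hl] <;>
          simp only [isOne, if_pos, if_neg, reduceIte] <;>
          refine ⟨by rw [hstep]; push_cast; rfl, ?_⟩
        · left; rw [hs, prod_sub]; ring_nf
        · left; rw [hs, prod_sub]; ring_nf
        · right; rw [hs, prod_sub]; ring_nf
        · right; rw [hs, prod_sub]; ring_nf
      · push_neg at hax
        have h1 : ∃ i < k, isOne (La w i) = true := (c1_pos_iff w k).1 (by omega)
        have h2 : ∃ j < k, isOne (La w j) = false := (c2_pos_iff w k).1 (by omega)
        have hgood := hsh k (by omega) hk' h1 h2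
        have haxZ : ¬ ((c1 w k : ℤ) = 0 ∨ (c2 w k : ℤ) = 0) := by
          push_neg
          constructor
          · exact_mod_cast hax.1
          · exact_mod_cast hax.2
        rcases hgood with hl | hl <;>
          rw [hl] at hstep hs <;>
          unfold walkStep at hstep hs <;>
          rw [if_neg haxZ] at hstep hs <;>
          simp only at hstep hs <;>
          rw [c1_succ, c2_succ, hl] <;>
          simp only [isOne, reduceIte] <;>
          refine ⟨by rw [hstep]; push_cast; rfl, ?_⟩
        · left; rw [hs, prod_sub]; ring_nf
        · right; rw [hs, prod_sub]; ring_nf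
    refine ⟨key.1, fun i hi => ?_⟩
    rcases Nat.lt_or_ge i k with h | h
    · exact hsteps i h
    · have : i = k := by omega
      rw [this]; exact key.2

lemma steps_iff_shape (w : List SLetter) :
    (∀ i < w.length, stepAt w i = (1, 0) ∨ stepAt w i = (0, 1)) ↔ ShapeP w := by
  constructor
  · intro hst
    intro k hk h1 h2
    by_contra hbad
    induction k using Nat.strong_induction_on with
    | _ k ihk =>
      have hsh : ∀ k' < k, k' < w.length →
          (∃ i < k', isOne (La w i) = true) → (∃ j < k', isOne (La w j) = false) →
          (La w k' = one' ∨ La w k' = two) := by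
        intro k' h1' h2' h3' h4'
        by_contra hb
        exact ihk k' h1' h2' h3' h4' hb
      obtain ⟨hpos, _⟩ := shape_invariant w k (by omega) hsh
      have hc1 : 0 < c1 w k := (c1_pos_iff w k).2 h1
      have hc2 : 0 < c2 w k := (c2_pos_iff w k).2 h2
      have haxZ : ¬ ((c1 w k : ℤ) = 0 ∨ (c2 w k : ℤ) = 0) := by
        push_neg
        constructor
        · exact_mod_cast Nat.pos_iff_ne_zero.1 hc1
        · exact_mod_cast Nat.pos_iff_ne_zero.1 hc2
      have hst' := hst k hk
      have hs : stepAt w k =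
          walkStep ((c1 w k : ℤ), (c2 w k : ℤ)) (La w k) - ((c1 w k : ℤ), (c2 w k : ℤ)) := by
        unfold stepAt
        rw [walk_take_succ w k hk, hpos]
      rcases hl : La w k with _|_|_|_
      · exact hbad (Or.inl hl)
      · rw [hl] at hs
        unfold walkStep at hs
        rw [if_neg haxZ] at hs
        simp only at hs
        rw [hs, prod_sub] at hst'
        rcases hst' with h | h <;> simp [Prod.ext_iff] at h <;> omega
      · rw [hl] at hs
        unfold walkStep at hs
        rw [if_neg haxZ] at hs
        simp only at hs
        rw [hs, prod_sub] at hst'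
        rcases hst' with h | h <;> simp [Prod.ext_iff] at h <;> omega
      · exact hbad (Or.inr hl)
  · intro hsh
    exact (shape_invariant w w.length (le_refl _)
      (fun k' h1 h2 h3 h4 => hsh k' h2 h3 h4)).2

/-- getD of set -/
lemma La_set (w : List SLetter) (p : ℕ) (a : SLetter) (i : ℕ) :
    La (w.set p a) i = if p = i ∧ p < w.length then a else La w i := by
  unfold La
  rw [List.getD_eq_getElem?_getD, List.getD_eq_getElem?_getD, List.getElem?_set]
  by_cases h : p = i
  · subst h
    by_cases h2 : p < w.length
    · rw [if_pos rfl, if_pos h2, if_pos ⟨rfl, h2⟩]; rfl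
    · rw [if_pos rfl, if_neg h2, if_neg (by tauto)]
      rw [List.getElem?_eq_none (by simpa using h2)]
  · rw [if_neg h, if_neg (by tauto)]

lemma Fprime_isSome_iff (w : List SLetter) :
    (Fprime w).isSome ↔ (∃ v, IsCanonical v ∧ stdList v = stdList w ∧
      wt1 v + 1 = wt1 w ∧ wt2 v = wt2 w + 1) := by
  unfold Fprime
  split <;> simp_all

lemma Eprime_isSome_iff (w : List SLetter) :
    (Eprime w).isSome ↔ (∃ v, IsCanonical v ∧ stdList v = stdList w ∧
      wt1 v = wt1 w + 1 ∧ wt2 v + 1 = wt2 w) := by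
  unfold Eprime
  split <;> simp_all

lemma Fprime_eq_some (w v : List SLetter) (h : Fprime w = some v) :
    IsCanonical v ∧ stdList v = stdList w ∧ wt1 v + 1 = wt1 w ∧ wt2 v = wt2 w + 1 := by
  unfold Fprime at h
  split at h
  · next hex =>
    have := hex.choose_spec
    simp only [Option.some.injEq] at h
    rwa [h] at this
  · exact absurd h (by simp)

lemma Eprime_eq_some (w v : List SLetter) (h : Eprime w = some v) :
    IsCanonical v ∧ stdList v = stdList w ∧ wt1 v = wt1 w + 1 ∧ wt2 v + 1 = wt2 w := by
  unfold Eprime at h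
  split at h
  · next hex =>
    have := hex.choose_spec
    simp only [Option.some.injEq] at h
    rwa [h] at this
  · exact absurd h (by simp)

end Aux3
section Aux4

lemma relB_one (a b : SLetter) (h : isOne a = true) : relB a b = !(b == one') := by
  simp [relB, h]

lemma relB_two (a b : SLetter) (h : isOne a = false) : relB a b = (b == two) := by
  simp [relB, h]

lemma beq_two_false_of_one (b : SLetter) (h : isOne b = true) : (b == two) = false := by
  cases b <;> simp_all [isOne]

lemma beq_one'_false_of_two (b : SLetter) (h : isOne b = false) : (b == one') = false := by
  cases b <;> simp_all [isOne]

lemma eq_one_of (b : SLetter) (h1 : isOne b = true) (h2 : (b == one') = false) : b = one := by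
  cases b <;> simp_all [isOne]

lemma eq_one'_of (b : SLetter) (h1 : isOne b = true) (h2 : (b == one') = true) : b = one' := by
  cases b <;> simp_all [isOne]

lemma eq_two_of (b : SLetter) (h1 : isOne b = false) (h2 : (b == two) = true) : b = two := by
  cases b <;> simp_all [isOne]

lemma eq_two'_of (b : SLetter) (h1 : isOne b = false) (h2 : (b == two) = false) : b = two' := by
  cases b <;> simp_all [isOne]

lemma La_default (w : List SLetter) (i : ℕ) (h : w.length ≤ i) : La w i = one := by
  unfold La
  exact List.getD_eq_default _ _ (by omega)

/-- the unique position where the 1-valued sets differ -/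
lemma diff_spec (x y : List SLetter) (hA : Agr x y) (hw : wt1 x = wt1 y + 1) :
    ∃ p, p < x.length ∧ isOne (La x p) = true ∧ isOne (La y p) = false ∧
      ∀ i, i ≠ p → isOne (La x i) = isOne (La y i) := by
  obtain ⟨hlen, hrel⟩ := hA
  have hsub : Ones y ⊆ Ones x := by
    intro i hi
    by_contra hix
    have hex : ∃ j ∈ Ones x, j ∉ Ones y := by
      by_contra hall
      push_neg at hall
      have hs : Ones x ⊆ Ones y := hall
      have := Finset.card_le_card hs
      rw [← wt1_eq_card, ← wt1_eq_card] at this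
      omega
    obtain ⟨j, hjx, hjy⟩ := hex
    rw [mem_Ones] at hi hjx
    have hiy : isOne (La y i) = true := hi.2
    have hin : i < y.length := hi.1
    have hinx : i < x.length := by omega
    have hjxo : isOne (La x j) = true := hjx.2
    have hjn : j < x.length := hjx.1
    have hix' : isOne (La x i) = false := by
      rcases hb : isOne (La x i) with _ | _
      · rfl
      · exact absurd (by rw [mem_Ones]; exact ⟨hinx, hb⟩) hix
    have hjy' : isOne (La y j) = false := by
      rcases hb : isOne (La y j) with _ | _
      · rfl
      · exact absurd (by rw [mem_Ones]; exact ⟨by omega, hb⟩) hjy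
    have hij : i ≠ j := by
      rintro rfl
      rw [hix'] at hjxo
      exact Bool.noConfusion hjxo
    rcases lt_or_gt_of_ne hij with h | h
    · have hr := hrel i j h hjn
      rw [relB_two _ _ hix', relB_one _ _ hiy, beq_two_false_of_one _ hjxo,
        beq_one'_false_of_two _ hjy'] at hr
      exact Bool.noConfusion hr
    · have hr := hrel j i h hinx
      rw [relB_one _ _ hjxo, relB_two _ _ hjy', beq_one'_false_of_two _ hix',
        beq_two_false_of_one _ hiy] at hr
      exact Bool.noConfusion hr
  have hcard : (Ones x \ Ones y).card = 1 := by
    rw [Finset.card_sdiff_of_subset hsub]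
    have h1 := wt1_eq_card x
    have h2 := wt1_eq_card y
    omega
  obtain ⟨p, hp⟩ := Finset.card_eq_one.1 hcard
  have hpmem : p ∈ Ones x \ Ones y := by rw [hp]; exact Finset.mem_singleton_self p
  rw [Finset.mem_sdiff] at hpmem
  obtain ⟨hpx, hpy⟩ := hpmem
  rw [mem_Ones] at hpx
  refine ⟨p, hpx.1, hpx.2, ?_, ?_⟩
  · rcases hb : isOne (La y p) with _ | _
    · rfl
    · exact absurd (by rw [mem_Ones]; exact ⟨by omega, hb⟩) hpy
  · intro i hip
    by_cases hin : i < x.length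
    · by_cases hiy : i ∈ Ones y
      · have hix2 : i ∈ Ones x := hsub hiy
        rw [mem_Ones] at hix2 hiy
        rw [hix2.2, hiy.2]
      · have h1 : isOne (La y i) = false := by
          rcases hb : isOne (La y i) with _ | _
          · rfl
          · exact absurd (by rw [mem_Ones]; exact ⟨by omega, hb⟩) hiy
        have h2 : isOne (La x i) = false := by
          rcases hb : isOne (La x i) with _ | _
          · rfl
          · exfalso
            have : i ∈ Ones x \ Ones y := by
              rw [Finset.mem_sdiff, mem_Ones]
              exact ⟨⟨hin, hb⟩, hiy⟩
            rw [hp, Finset.mem_singleton] at this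
            exact hip this
        rw [h1, h2]
    · rw [La_default x i (by omega), La_default y i (by omega)]

section Toolkit

variable (x y : List SLetter) (p : ℕ)
variable (hA : Agr x y)
variable (hpx : isOne (La x p) = true) (hpy : isOne (La y p) = false)
variable (hpn : p < x.length)
variable (hsh : ∀ i, i ≠ p → isOne (La x i) = isOne (La y i))

include hA hpx hpy hpn hsh

omit hpy hpn in
/-- prime sharing for 1-valued letters -/
lemma T1 (i j : ℕ) (hij : i < j) (hjn : j < x.length) (hipne : i ≠ p) (hjpne : j ≠ p)
    (hi1 : isOne (La x i) = true) (hj1 : isOne (La x j) = true) :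
    (La x j = one') ↔ (La y j = one') := by
  have hr := hA.2 i j hij hjn
  rw [relB_one _ _ hi1, relB_one _ _ ((hsh i hipne) ▸ hi1)] at hr
  have hy1 : isOne (La y j) = true := (hsh j hjpne) ▸ hj1
  constructor
  · intro h
    apply eq_one'_of _ hy1
    rcases hb : (La y j == one') with _ | _
    · rw [hb, h] at hr; simp at hr
    · rfl
  · intro h
    apply eq_one'_of _ hj1
    rcases hb : (La x j == one') with _ | _
    · rw [hb, h] at hr; simp at hr
    · rfl

omit hpy hpn in
/-- prime sharing for 2-valued letters -/
lemma T1' (i j : ℕ) (hij : i < j) (hjn : j < x.length) (hipne : i ≠ p) (hjpne : j ≠ p)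
    (hi2 : isOne (La x i) = false) (hj2 : isOne (La x j) = false) :
    (La x j = two) ↔ (La y j = two) := by
  have hr := hA.2 i j hij hjn
  rw [relB_two _ _ hi2, relB_two _ _ ((hsh i hipne) ▸ hi2)] at hr
  have hy2 : isOne (La y j) = false := (hsh j hjpne) ▸ hj2
  constructor
  · intro h
    apply eq_two_of _ hy2
    rw [← hr, h]; rfl
  · intro h
    apply eq_two_of _ hj2
    rw [hr, h]; rfl

omit hpn in
lemma T2 (j : ℕ) (hpj : p < j) (hjn : j < x.length) (hjpne : j ≠ p)
    (hj1 : isOne (La x j) = true) : La x j = one' := by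
  have hr := hA.2 p j hpj hjn
  rw [relB_one _ _ hpx, relB_two _ _ hpy] at hr
  have hy1 : isOne (La y j) = true := (hsh j hjpne) ▸ hj1
  rw [beq_two_false_of_one _ hy1] at hr
  apply eq_one'_of _ hj1
  rcases hb : (La x j == one') with _ | _
  · rw [hb] at hr; simp at hr
  · rfl

lemma T3 (j : ℕ) (hjp : j < p) (hjpne : j ≠ p) (hj1 : isOne (La x j) = true) :
    La x p = one := by
  have hr := hA.2 j p hjp hpn
  rw [relB_one _ _ hj1, relB_one _ _ ((hsh j hjpne) ▸ hj1)] at hr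
  rw [beq_one'_false_of_two _ hpy] at hr
  apply eq_one_of _ hpx
  rcases hb : (La x p == one') with _ | _
  · rfl
  · rw [hb] at hr; simp at hr

lemma T4 (t : ℕ) (htp : t < p) (htpne : t ≠ p) (ht2 : isOne (La x t) = false) :
    La y p = two' := by
  have hr := hA.2 t p htp hpn
  rw [relB_two _ _ ht2, relB_two _ _ ((hsh t htpne) ▸ ht2)] at hr
  rw [beq_two_false_of_one _ hpx] at hr
  apply eq_two'_of _ hpy
  rw [← hr]

omit hpn in
lemma T5 (t : ℕ) (hpt : p < t) (htn : t < x.length) (htpne : t ≠ p)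
    (ht2 : isOne (La x t) = false) : La y t = two := by
  have hr := hA.2 p t hpt htn
  rw [relB_one _ _ hpx, relB_two _ _ hpy] at hr
  rw [beq_one'_false_of_two _ ht2] at hr
  apply eq_two_of _ ((hsh t htpne) ▸ ht2)
  rw [← hr]; rfl

end Toolkit

end Aux4
section Aux5

lemma claim1 (x y z : List SLetter) (p1 p2 : ℕ)
    (hAxy : Agr x y) (hAyz : Agr y z)
    (hp1x : isOne (La x p1) = true) (hp1y : isOne (La y p1) = false) (hp1n : p1 < x.length)
    (hsh1 : ∀ i, i ≠ p1 → isOne (La x i) = isOne (La y i))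
    (hp2y : isOne (La y p2) = true) (hp2z : isOne (La z p2) = false) (hp2n : p2 < y.length)
    (hsh2 : ∀ i, i ≠ p2 → isOne (La y i) = isOne (La z i))
    (o0 t0 : ℕ)
    (ho0 : La y o0 = one) (ht0 : La y t0 = two)
    (m : ℕ) (hmn : m < y.length) (hmo : o0 < m) (hmt : t0 < m) (hm1 : La y m = one) :
    False := by
  have hlen1 := hAxy.1
  have hlen2 := hAyz.1
  have hm1' : isOne (La y m) = true := by rw [hm1]; rfl
  have hmp1 : m ≠ p1 := fun h => by rw [h, hp1y] at hm1'; exact Bool.noConfusion hm1'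
  have ho0' : isOne (La y o0) = true := by rw [ho0]; rfl
  have ho0p1 : o0 ≠ p1 := fun h => by rw [h, hp1y] at ho0'; exact Bool.noConfusion ho0'
  have ht0' : isOne (La y t0) = false := by rw [ht0]; rfl
  have ht0p2 : t0 ≠ p2 := fun h => by rw [h, hp2y] at ht0'; exact Bool.noConfusion ht0'
  have hxm : isOne (La x m) = true := by rw [hsh1 m hmp1]; exact hm1'
  have hxo0 : isOne (La x o0) = true := by rw [hsh1 o0 ho0p1]; exact ho0'
  have hmltp1 : m < p1 := by
    rcases lt_trichotomy m p1 with h | h | h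
    · exact h
    · exact absurd h hmp1
    · exfalso
      have h1' := T2 x y p1 hAxy hp1x hp1y hsh1 m h (by omega) hmp1 hxm
      have h2' := T1 x y p1 hAxy hp1x hsh1 o0 m hmo (by omega) ho0p1 hmp1 hxo0 hxm
      have := h2'.1 h1'
      rw [hm1] at this
      exact SLetter.noConfusion this
  have hxp1 : La x p1 = one := T3 x y p1 hAxy hp1x hp1y hp1n hsh1 m hmltp1 hmp1 hxm
  have hp2ltp1 : p2 < p1 := by
    rcases lt_trichotomy p2 m with h | h | h
    · exfalso
      have := T2 y z p2 hAyz hp2y hp2z hsh2 m h hmn (by omega) hm1'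
      rw [hm1] at this
      exact SLetter.noConfusion this
    · omega
    · have hyp2 : La y p2 = one := T3 y z p2 hAyz hp2y hp2z hp2n hsh2 m h (by omega) hm1'
      have hp2p1 : p2 ≠ p1 := fun he => by rw [he, hp1y] at hp2y; exact Bool.noConfusion hp2y
      rcases lt_trichotomy p1 p2 with h2 | h2 | h2
      · exfalso
        have hxp2one : isOne (La x p2) = true := by rw [hsh1 p2 hp2p1]; exact hp2y
        have ha := T2 x y p1 hAxy hp1x hp1y hsh1 p2 h2 (by omega) hp2p1 hxp2one
        have hb := T1 x y p1 hAxy hp1x hsh1 o0 p2 (by omega) (by omega) ho0p1 hp2p1 hxo0 hxp2one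
        have := hb.1 ha
        rw [hyp2] at this
        exact SLetter.noConfusion this
      · exact absurd h2.symm hp2p1
      · exact h2
  have ht0p1 : t0 ≠ p1 := by omega
  have hxt0 : isOne (La x t0) = false := by rw [hsh1 t0 ht0p1]; exact ht0'
  have hr := hAxy.2 t0 p1 (by omega) (by omega)
  rw [relB_two _ _ hxt0, relB_two _ _ ht0', hxp1] at hr
  have hyp1two' : La y p1 = two' := eq_two'_of _ hp1y (by rw [← hr]; rfl)
  have hp1p2 : p1 ≠ p2 := by omega
  have hzp1 : La z p1 = two :=
    T5 y z p2 hAyz hp2y hp2z hsh2 p1 hp2ltp1 (by omega) hp1p2 hp1y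
  have hr2 := hAyz.2 t0 p1 (by omega) (by omega)
  rw [relB_two _ _ ht0', relB_two _ _ (by rw [← hsh2 t0 ht0p2]; exact ht0'), hyp1two', hzp1] at hr2
  simp at hr2

lemma middle_shape (x y z : List SLetter) (hAxy : Agr x y) (hAyz : Agr y z)
    (hcy : IsCanonical y) (hw1 : wt1 x = wt1 y + 1) (hw2 : wt1 y = wt1 z + 1) : ShapeP y := by
  obtain ⟨p1, hp1n, hp1x, hp1y, hsh1⟩ := diff_spec x y hAxy hw1
  obtain ⟨p2, hp2n, hp2y, hp2z, hsh2⟩ := diff_spec y z hAyz hw2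
  obtain ⟨hF1, hF2⟩ := (isCanonical_iff y).1 hcy
  intro k hk h1ex h2ex
  obtain ⟨i1, hi1k, hi1⟩ := h1ex
  obtain ⟨j1, hj1k, hj1⟩ := h2ex
  have hone : (Ones y).Nonempty := ⟨i1, by rw [mem_Ones]; exact ⟨by omega, hi1⟩⟩
  have htwo : (Twos y).Nonempty := ⟨j1, by rw [mem_Twos]; exact ⟨by omega, hj1⟩⟩
  set o0 := (Ones y).min' hone with ho0def
  set t0 := (Twos y).min' htwo with ht0def
  have ho0mem := Finset.min'_mem (Ones y) hone
  rw [mem_Ones] at ho0mem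
  have ht0mem := Finset.min'_mem (Twos y) htwo
  rw [mem_Twos] at ht0mem
  have ho0le : o0 ≤ i1 := Finset.min'_le _ _ (by rw [mem_Ones]; exact ⟨by omega, hi1⟩)
  have ht0le : t0 ≤ j1 := Finset.min'_le _ _ (by rw [mem_Twos]; exact ⟨by omega, hj1⟩)
  have ho0 : La y o0 = one := by
    apply hF1 o0 ho0mem.1 ho0mem.2
    intro i hio
    rcases hb : isOne (La y i) with _ | _
    · rfl
    · exfalso
      have hmem : i ∈ Ones y := by rw [mem_Ones]; exact ⟨by omega, hb⟩
      have := Finset.min'_le _ _ hmem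
      omega
  have ht0 : La y t0 = two := by
    apply hF2 t0 ht0mem.1 ht0mem.2
    intro i hit
    rcases hb : isOne (La y i) with _ | _
    · exfalso
      have hmem : i ∈ Twos y := by rw [mem_Twos]; exact ⟨by omega, hb⟩
      have := Finset.min'_le _ _ hmem
      omega
    · rfl
  by_contra hbad
  obtain ⟨hb1, hb2⟩ := not_or.1 hbad
  rcases hl : La y k with _ | _ | _ | _
  · exact hb1 hl
  · exact claim1 x y z p1 p2 hAxy hAyz hp1x hp1y hp1n hsh1 hp2y hp2z hp2n hsh2 o0 t0 ho0 ht0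
      k hk (by omega) (by omega) hl
  · have hl' : isOne (La y k) = false := by rw [hl]; rfl
    have hkp2 : k ≠ p2 := fun he => by rw [he, hp2y] at hl'; exact Bool.noConfusion hl'
    have ht0p2 : t0 ≠ p2 := fun he => by
      have : isOne (La y t0) = false := by rw [ht0]; rfl
      rw [he, hp2y] at this
      exact Bool.noConfusion this
    have ht0k : t0 < k := by
      rcases eq_or_lt_of_le (by omega : t0 ≤ k) with h | h
      · exfalso; rw [← h, ht0] at hl; exact SLetter.noConfusion hl
      · exact h
    rcases lt_trichotomy p2 k with h | h | h
    · have h5 := T5 y z p2 hAyz hp2y hp2z hsh2 k h (by omega) hkp2 hl'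
      have h1' := T1' y z p2 hAyz hp2y hsh2 t0 k ht0k (by omega) ht0p2 hkp2
        (by rw [ht0]; rfl) hl'
      have := h1'.2 h5
      rw [hl] at this
      exact SLetter.noConfusion this
    · exact absurd h.symm hkp2
    · have hyp2 : La y p2 = one := T3 y z p2 hAyz hp2y hp2z hp2n hsh2 o0 (by omega) (by omega)
        (by rw [ho0]; rfl)
      exact claim1 x y z p1 p2 hAxy hAyz hp1x hp1y hp1n hsh1 hp2y hp2z hp2n hsh2 o0 t0 ho0 ht0
        p2 hp2n (by omega) (by omega) hyp2
  · exact hb2 hl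

lemma transfer_up (x y : List SLetter) (hA : Agr x y) (hw : wt1 x = wt1 y + 1)
    (hsy : ShapeP y) : ShapeP x := by
  obtain ⟨p, hpn, hpx, hpy, hsh⟩ := diff_spec x y hA hw
  have hlen := hA.1
  intro k hk h1ex h2ex
  by_contra hbad
  obtain ⟨hb1, hb2⟩ := not_or.1 hbad
  obtain ⟨i1, hi1k, hi1⟩ := h1ex
  obtain ⟨j1, hj1k, hj1⟩ := h2ex
  have hj1p : j1 ≠ p := fun he => by rw [he, hpx] at hj1; exact Bool.noConfusion hj1
  have hyj1 : isOne (La y j1) = false := by rw [← hsh j1 hj1p]; exact hj1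
  rcases hl : La x k with _ | _ | _ | _
  · exact hb1 hl
  · have hk1 : isOne (La x k) = true := by rw [hl]; rfl
    by_cases hkp : k = p
    · subst hkp
      have hi1p : i1 ≠ k := by omega
      have hyp : La y k = two' := T4 x y k hA hpx hpy hpn hsh j1 hj1k hj1p hj1
      have := hsy k (by omega) ⟨i1, hi1k, by rw [← hsh i1 hi1p]; exact hi1⟩ ⟨j1, hj1k, hyj1⟩
      rw [hyp] at this
      rcases this with h | h <;> exact SLetter.noConfusion h
    · by_cases hex : ∃ i, i < k ∧ isOne (La x i) = true ∧ i ≠ p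
      · obtain ⟨i, hik, hi, hip⟩ := hex
        have ht1 := T1 x y p hA hpx hsh i k hik hk hip hkp hi hk1
        have hyk' : isOne (La y k) = true := by rw [← hsh k hkp]; exact hk1
        have hyk : La y k = one := by
          apply eq_one_of _ hyk'
          rcases hb : (La y k == one') with _ | _
          · rfl
          · have := ht1.2 (eq_one'_of _ hyk' hb)
            rw [hl] at this
            exact SLetter.noConfusion this
        have := hsy k (by omega) ⟨i, hik, by rw [← hsh i hip]; exact hi⟩ ⟨j1, hj1k, hyj1⟩
        rw [hyk] at this
        rcases this with h | h <;> exact SLetter.noConfusion h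
      · push_neg at hex
        have hi1p : i1 = p := hex i1 hi1k hi1
        have hpk : p < k := by omega
        have := T2 x y p hA hpx hpy hsh k hpk hk hkp hk1
        rw [hl] at this
        exact SLetter.noConfusion this
  · have hk2 : isOne (La x k) = false := by rw [hl]; rfl
    have hkp : k ≠ p := fun he => by rw [he, hpx] at hk2; exact Bool.noConfusion hk2
    have ht1' := T1' x y p hA hpx hsh j1 k hj1k hk hj1p hkp hj1 hk2
    have hyk2 : isOne (La y k) = false := by rw [← hsh k hkp]; exact hk2
    have hyk : La y k = two' := by
      apply eq_two'_of _ hyk2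
      rcases hb : (La y k == two) with _ | _
      · rfl
      · have := ht1'.2 (eq_two_of _ hyk2 hb)
        rw [hl] at this
        exact SLetter.noConfusion this
    by_cases hex : ∃ i, i < k ∧ isOne (La x i) = true ∧ i ≠ p
    · obtain ⟨i, hik, hi, hip⟩ := hex
      have := hsy k (by omega) ⟨i, hik, by rw [← hsh i hip]; exact hi⟩ ⟨j1, hj1k, hyj1⟩
      rw [hyk] at this
      rcases this with h | h <;> exact SLetter.noConfusion h
    · push_neg at hex
      have hi1p : i1 = p := hex i1 hi1k hi1
      have hpk : p < k := by omega
      have hr := hA.2 p k hpk hk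
      rw [relB_one _ _ hpx, relB_two _ _ hpy, beq_one'_false_of_two _ hk2, hyk] at hr
      simp at hr
  · exact hb2 hl

lemma transfer_down (y z : List SLetter) (hA : Agr y z) (hw : wt1 y = wt1 z + 1)
    (hsy : ShapeP y) : ShapeP z := by
  obtain ⟨p, hpn, hpy, hpz, hsh⟩ := diff_spec y z hA hw
  have hlen := hA.1
  intro k hk h1ex h2ex
  have hkn : k < y.length := by omega
  by_contra hbad
  obtain ⟨hb1, hb2⟩ := not_or.1 hbad
  obtain ⟨i1, hi1k, hi1⟩ := h1ex
  obtain ⟨j1, hj1k, hj1⟩ := h2ex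
  have hi1p : i1 ≠ p := fun he => by rw [he, hpz] at hi1; exact Bool.noConfusion hi1
  have hyi1 : isOne (La y i1) = true := by rw [hsh i1 hi1p]; exact hi1
  rcases hl : La z k with _ | _ | _ | _
  · exact hb1 hl
  · have hk1 : isOne (La z k) = true := by rw [hl]; rfl
    have hkp : k ≠ p := fun he => by rw [he, hpz] at hk1; exact Bool.noConfusion hk1
    have hyk1 : isOne (La y k) = true := by rw [hsh k hkp]; exact hk1
    have ht1 := T1 y z p hA hpy hsh i1 k hi1k hkn hi1p hkp hyi1 hyk1
    have hyk : La y k = one := by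
      apply eq_one_of _ hyk1
      rcases hb : (La y k == one') with _ | _
      · rfl
      · have := ht1.1 (eq_one'_of _ hyk1 hb)
        rw [hl] at this
        exact SLetter.noConfusion this
    by_cases hex : ∃ j, j < k ∧ isOne (La z j) = false ∧ j ≠ p
    · obtain ⟨j, hjk, hj, hjp⟩ := hex
      have := hsy k hkn ⟨i1, hi1k, hyi1⟩ ⟨j, hjk, by rw [hsh j hjp]; exact hj⟩
      rw [hyk] at this
      rcases this with h | h <;> exact SLetter.noConfusion h
    · push_neg at hex
      have hj1p : j1 = p := hex j1 hj1k hj1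
      have hpk : p < k := by omega
      have := T2 y z p hA hpy hpz hsh k hpk hkn hkp hyk1
      rw [hyk] at this
      exact SLetter.noConfusion this
  · have hk2 : isOne (La z k) = false := by rw [hl]; rfl
    by_cases hkp : k = p
    · subst hkp
      have hj1p : j1 ≠ k := by omega
      have hyj1 : isOne (La y j1) = false := by rw [hsh j1 hj1p]; exact hj1
      have hsk := hsy k hkn ⟨i1, hi1k, hyi1⟩ ⟨j1, hj1k, hyj1⟩
      have hyk : La y k = one' := by
        rcases hsk with h | h
        · exact h
        · exfalso
          rw [h] at hpy
          exact Bool.noConfusion hpy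
      have hr := hA.2 i1 k hi1k hkn
      rw [relB_one _ _ hyi1, relB_one _ _ hi1, hyk, hl] at hr
      simp at hr
    · have hyk2 : isOne (La y k) = false := by rw [hsh k hkp]; exact hk2
      by_cases hex : ∃ j, j < k ∧ isOne (La z j) = false ∧ j ≠ p
      · obtain ⟨j, hjk, hj, hjp⟩ := hex
        have hyj : isOne (La y j) = false := by rw [hsh j hjp]; exact hj
        have ht1' := T1' y z p hA hpy hsh j k hjk hkn hjp hkp hyj hyk2
        have hyk : La y k = two' := by
          apply eq_two'_of _ hyk2
          rcases hb : (La y k == two) with _ | _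
          · rfl
          · have := ht1'.1 (eq_two_of _ hyk2 hb)
            rw [hl] at this
            exact SLetter.noConfusion this
        have := hsy k hkn ⟨i1, hi1k, hyi1⟩ ⟨j, hjk, hyj⟩
        rw [hyk] at this
        rcases this with h | h <;> exact SLetter.noConfusion h
      · push_neg at hex
        have hj1p : j1 = p := hex j1 hj1k hj1
        have hpk : p < k := by omega
        have hr := hA.2 p k hpk hkn
        rw [relB_one _ _ hpy, relB_two _ _ hpz, beq_one'_false_of_two _ hyk2, hl] at hr
        simp at hr
  · exact hb2 hl

end Aux5
section Aux6

lemma La_set_eq (w : List SLetter) (p : ℕ) (a : SLetter) (hp : p < w.length) :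
    La (w.set p a) p = a := by
  rw [La_set, if_pos ⟨rfl, hp⟩]

lemma La_set_ne (w : List SLetter) (p : ℕ) (a : SLetter) (i : ℕ) (h : p ≠ i) :
    La (w.set p a) i = La w i := by
  rw [La_set, if_neg (by tauto)]

lemma Ones_set_toTwo (w : List SLetter) (p : ℕ) (a : SLetter)
    (ha : isOne a = false) (h1 : isOne (La w p) = true) :
    Ones (w.set p a) = (Ones w).erase p := by
  ext i
  rw [Finset.mem_erase, mem_Ones, mem_Ones, List.length_set]
  by_cases hip : i = p
  · subst hip
    constructor
    · rintro ⟨hlt, hone⟩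
      rw [La_set_eq _ _ _ hlt, ha] at hone
      exact absurd hone (by simp)
    · rintro ⟨hne, _⟩
      exact absurd rfl hne
  · rw [La_set_ne _ _ _ _ (Ne.symm hip)]
    tauto

lemma Twos_set_toTwo (w : List SLetter) (p : ℕ) (a : SLetter) (hp : p < w.length)
    (ha : isOne a = false) (h1 : isOne (La w p) = true) :
    Twos (w.set p a) = insert p (Twos w) := by
  ext i
  rw [Finset.mem_insert, mem_Twos, mem_Twos, List.length_set]
  by_cases hip : i = p
  · subst hip
    constructor
    · intro _; exact Or.inl rfl
    · intro _
      exact ⟨hp, by rw [La_set_eq _ _ _ hp]; exact ha⟩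
  · rw [La_set_ne _ _ _ _ (Ne.symm hip)]
    constructor
    · intro h; exact Or.inr h
    · rintro (h | h)
      · exact absurd h hip
      · exact h

lemma Ones_set_toOne (w : List SLetter) (p : ℕ) (a : SLetter) (hp : p < w.length)
    (ha : isOne a = true) (h1 : isOne (La w p) = false) :
    Ones (w.set p a) = insert p (Ones w) := by
  ext i
  rw [Finset.mem_insert, mem_Ones, mem_Ones, List.length_set]
  by_cases hip : i = p
  · subst hip
    constructor
    · intro _; exact Or.inl rfl
    · intro _
      exact ⟨hp, by rw [La_set_eq _ _ _ hp]; exact ha⟩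
  · rw [La_set_ne _ _ _ _ (Ne.symm hip)]
    constructor
    · intro h; exact Or.inr h
    · rintro (h | h)
      · exact absurd h hip
      · exact h

lemma Twos_set_toOne (w : List SLetter) (p : ℕ) (a : SLetter)
    (ha : isOne a = true) (h1 : isOne (La w p) = false) :
    Twos (w.set p a) = (Twos w).erase p := by
  ext i
  rw [Finset.mem_erase, mem_Twos, mem_Twos, List.length_set]
  by_cases hip : i = p
  · subst hip
    constructor
    · rintro ⟨hlt, hone⟩
      rw [La_set_eq _ _ _ hlt, ha] at hone
      exact absurd hone (by simp)
    · rintro ⟨hne, _⟩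
      exact absurd rfl hne
  · rw [La_set_ne _ _ _ _ (Ne.symm hip)]
    tauto

lemma Ones_set_same (w : List SLetter) (p : ℕ) (a : SLetter)
    (h : isOne a = isOne (La w p)) : Ones (w.set p a) = Ones w := by
  ext i
  rw [mem_Ones, mem_Ones, List.length_set]
  by_cases hip : i = p
  · subst hip
    by_cases hlt : i < w.length
    · rw [La_set_eq _ _ _ hlt, h]
    · tauto
  · rw [La_set_ne _ _ _ _ (Ne.symm hip)]

lemma Twos_set_same (w : List SLetter) (p : ℕ) (a : SLetter)
    (h : isOne a = isOne (La w p)) : Twos (w.set p a) = Twos w := by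
  ext i
  rw [mem_Twos, mem_Twos, List.length_set]
  by_cases hip : i = p
  · subst hip
    by_cases hlt : i < w.length
    · rw [La_set_eq _ _ _ hlt, h]
    · tauto
  · rw [La_set_ne _ _ _ _ (Ne.symm hip)]

lemma wt_set_toTwo (w : List SLetter) (p : ℕ) (a : SLetter) (hp : p < w.length)
    (h1 : isOne (La w p) = true) (ha : isOne a = false) :
    wt1 (w.set p a) + 1 = wt1 w ∧ wt2 (w.set p a) = wt2 w + 1 := by
  have hmem1 : p ∈ Ones w := by rw [mem_Ones]; exact ⟨hp, h1⟩
  have hmem2 : p ∉ Twos w := by rw [mem_Twos]; rintro ⟨_, h⟩; rw [h1] at h; exact Bool.noConfusion h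
  constructor
  · rw [wt1_eq_card, wt1_eq_card, Ones_set_toTwo w p a ha h1,
      Finset.card_erase_of_mem hmem1]
    have : 1 ≤ (Ones w).card := Finset.card_pos.2 ⟨p, hmem1⟩
    omega
  · rw [wt2_eq_card, wt2_eq_card, Twos_set_toTwo w p a hp ha h1,
      Finset.card_insert_of_notMem hmem2]

lemma wt_set_toOne (w : List SLetter) (p : ℕ) (a : SLetter) (hp : p < w.length)
    (h1 : isOne (La w p) = false) (ha : isOne a = true) :
    wt1 (w.set p a) = wt1 w + 1 ∧ wt2 (w.set p a) + 1 = wt2 w := by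
  have hmem1 : p ∈ Twos w := by rw [mem_Twos]; exact ⟨hp, h1⟩
  have hmem2 : p ∉ Ones w := by rw [mem_Ones]; rintro ⟨_, h⟩; rw [h1] at h; exact Bool.noConfusion h
  constructor
  · rw [wt1_eq_card, wt1_eq_card, Ones_set_toOne w p a hp ha h1,
      Finset.card_insert_of_notMem hmem2]
  · rw [wt2_eq_card, wt2_eq_card, Twos_set_toOne w p a ha h1,
      Finset.card_erase_of_mem hmem1]
    have : 1 ≤ (Twos w).card := Finset.card_pos.2 ⟨p, hmem1⟩
    omega

lemma wt_set_same (w : List SLetter) (p : ℕ) (a : SLetter)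
    (h : isOne a = isOne (La w p)) :
    wt1 (w.set p a) = wt1 w ∧ wt2 (w.set p a) = wt2 w := by
  rw [wt1_eq_card, wt1_eq_card, wt2_eq_card, wt2_eq_card,
    Ones_set_same w p a h, Twos_set_same w p a h]
  exact ⟨rfl, rfl⟩

/-- structural facts for canonical Shape words -/
lemma normal_form (w : List SLetter) (hc : IsCanonical w) (hs : ShapeP w)
    (hone : (Ones w).Nonempty) (htwo : (Twos w).Nonempty) :
    ∃ o0 t0, o0 < w.length ∧ t0 < w.length ∧ La w o0 = one ∧ La w t0 = two ∧
      (∀ i < o0, isOne (La w i) = false) ∧ (∀ i < t0, isOne (La w i) = true) ∧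
      (∀ k < w.length, o0 < k → t0 < k → (La w k = one' ∨ La w k = two)) ∧
      (o0 = 0 ∨ t0 = 0) := by
  obtain ⟨hF1, hF2⟩ := (isCanonical_iff w).1 hc
  set o0 := (Ones w).min' hone with ho0def
  set t0 := (Twos w).min' htwo with ht0def
  have ho0mem := Finset.min'_mem (Ones w) hone
  rw [mem_Ones] at ho0mem
  have ht0mem := Finset.min'_mem (Twos w) htwo
  rw [mem_Twos] at ht0mem
  have hbef1 : ∀ i < o0, isOne (La w i) = false := by
    intro i hio
    rcases hb : isOne (La w i) with _ | _
    · rfl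
    · exfalso
      have : i ∈ Ones w := by rw [mem_Ones]; exact ⟨by omega, hb⟩
      have := Finset.min'_le _ _ this
      omega
  have hbef2 : ∀ i < t0, isOne (La w i) = true := by
    intro i hit
    rcases hb : isOne (La w i) with _ | _
    · exfalso
      have : i ∈ Twos w := by rw [mem_Twos]; exact ⟨by omega, hb⟩
      have := Finset.min'_le _ _ this
      omega
    · rfl
  refine ⟨o0, t0, ho0mem.1, ht0mem.1, ?_, ?_, hbef1, hbef2, ?_, ?_⟩
  · exact hF1 o0 ho0mem.1 ho0mem.2 hbef1
  · exact hF2 t0 ht0mem.1 ht0mem.2 hbef2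
  · intro k hk h1 h2
    exact hs k hk ⟨o0, h1, ho0mem.2⟩ ⟨t0, h2, ht0mem.2⟩
  · by_cases h : o0 = 0
    · exact Or.inl h
    · right
      by_contra ht
      have h1 := hbef1 0 (by omega)
      have h2 := hbef2 0 (by omega)
      rw [h1] at h2
      exact Bool.noConfusion h2

end Aux6
section Aux6b

lemma uniqOne (w : List SLetter) (o0 : ℕ) (ho0 : o0 ∈ Ones w) (ha1 : wt1 w = 1) :
    ∀ k, k < w.length → isOne (La w k) = true → k = o0 := by
  intro k hk hb
  by_contra hne
  have h1 : k ∈ Ones w := by rw [mem_Ones]; exact ⟨hk, hb⟩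
  have hsub : ({k, o0} : Finset ℕ) ⊆ Ones w := by
    intro x hx
    simp only [Finset.mem_insert, Finset.mem_singleton] at hx
    rcases hx with rfl | rfl
    · exact h1
    · exact ho0
  have hcard := Finset.card_le_card hsub
  rw [Finset.card_insert_of_notMem (by simp [hne]), Finset.card_singleton] at hcard
  rw [wt1_eq_card] at ha1
  omega

lemma construct_F (w : List SLetter) (hc : IsCanonical w) (hs : ShapeP w)
    (h1 : 1 ≤ wt1 w) (h2 : 1 ≤ wt2 w) :
    ∃ v, IsCanonical v ∧ stdList v = stdList w ∧ wt1 v + 1 = wt1 w ∧ wt2 v = wt2 w + 1 := by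
  have hone : (Ones w).Nonempty := by
    rw [← Finset.card_pos, ← wt1_eq_card]; omega
  have htwo : (Twos w).Nonempty := by
    rw [← Finset.card_pos, ← wt2_eq_card]; omega
  obtain ⟨o0, t0, ho0n, ht0n, ho0, ht0, hbef1, hbef2, hsh2, hzero⟩ :=
    normal_form w hc hs hone htwo
  have hone_o0 : isOne (La w o0) = true := by rw [ho0]; rfl
  have htwo_t0 : isOne (La w t0) = false := by rw [ht0]; rfl
  have hne : o0 ≠ t0 := fun he => by rw [he, htwo_t0] at hone_o0; exact Bool.noConfusion hone_o0
  rcases lt_or_gt_of_ne hne with hA | hB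
  · -- CASE A : o0 < t0, so o0 = 0, no two'
    have ho0z : o0 = 0 := by rcases hzero with h | h <;> omega
    have hw0 : La w 0 = one := ho0z ▸ ho0
    have hA2 : ∀ k, k < w.length → isOne (La w k) = false → La w k = two := by
      intro k hk hk2
      rcases lt_trichotomy k t0 with h | h | h
      · rw [hbef2 k h] at hk2; exact Bool.noConfusion hk2
      · rw [h]; exact ht0
      · rcases hsh2 k hk (by omega) h with hh | hh
        · rw [hh] at hk2; exact Bool.noConfusion hk2
        · exact hh
    set U := (Finset.range w.length).filter (fun i => La w i = one) with hU
    have hUne : U.Nonempty := ⟨o0, by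
      rw [hU]
      simp only [Finset.mem_filter, Finset.mem_range]
      exact ⟨ho0n, ho0⟩⟩
    set p := U.max' hUne with hpdef
    have hpmem := Finset.max'_mem U hUne
    rw [← hpdef] at hpmem
    rw [hU, Finset.mem_filter, Finset.mem_range] at hpmem
    obtain ⟨hpn, hwp⟩ := hpmem
    have hp1 : isOne (La w p) = true := by rw [hwp]; rfl
    have hpmax : ∀ k, p < k → k < w.length → isOne (La w k) = true → La w k = one' := by
      intro k hpk hk hk1
      rcases hlk : La w k with _ | _ | _ | _
      · rfl
      · exfalso
        have hmem : k ∈ U := by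
          rw [hU, Finset.mem_filter, Finset.mem_range]
          exact ⟨hk, hlk⟩
        have := Finset.le_max' U k hmem
        rw [← hpdef] at this
        omega
      · rw [hlk] at hk1; exact Bool.noConfusion hk1
      · rw [hlk] at hk1; exact Bool.noConfusion hk1
    have hpt0 : p < t0 := by
      rcases lt_trichotomy p t0 with h | h | h
      · exact h
      · exfalso; rw [h, ht0] at hwp; exact SLetter.noConfusion hwp
      · exfalso
        rcases hsh2 p hpn (by omega) h with hh | hh <;> rw [hh] at hwp <;>
          exact SLetter.noConfusion hwp
    by_cases hp0 : p = 0
    · -- p = 0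
      by_cases ha1 : wt1 w = 1
      · -- only one 1-valued letter, at 0
        have honly : ∀ k, k < w.length → k ≠ 0 → isOne (La w k) = false := by
          intro k hk hk0
          rcases hb : isOne (La w k) with _ | _
          · rfl
          · exfalso
            have hmem0 : (0:ℕ) ∈ Ones w := by
              rw [mem_Ones]
              exact ⟨by omega, by rw [hw0]; rfl⟩
            exact hk0 (uniqOne w 0 hmem0 ha1 k hk hb)
        refine ⟨w.set 0 two, ?_, ?_, (wt_set_toTwo w 0 two (by omega) (by rw [hw0]; rfl) rfl).1,
          (wt_set_toTwo w 0 two (by omega) (by rw [hw0]; rfl) rfl).2⟩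
        · rw [isCanonical_iff]
          constructor
          · intro j hj hj1 _
            exfalso
            rw [List.length_set] at hj
            by_cases hj0 : j = 0
            · subst hj0
              rw [La_set_eq _ _ _ (by omega)] at hj1
              exact Bool.noConfusion hj1
            · rw [La_set_ne _ _ _ _ (Ne.symm hj0), honly j hj hj0] at hj1
              exact Bool.noConfusion hj1
          · intro j hj hj2 hall
            rw [List.length_set] at hj
            by_cases hj0 : j = 0
            · subst hj0
              rw [La_set_eq _ _ _ (by omega)]
            · exfalso
              have := hall 0 (by omega)
              rw [La_set_eq _ _ _ (by omega)] at this
              exact Bool.noConfusion this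
        · rw [stdList_eq_iff_Agr]
          refine ⟨by simp, ?_⟩
          intro i j hij hjn
          rw [List.length_set] at hjn
          by_cases hi0 : i = 0
          · subst hi0
            rw [La_set_eq _ _ _ (by omega), La_set_ne _ _ _ _ (by omega), hw0,
              hA2 j hjn (honly j hjn (by omega))]
            decide
          · rw [La_set_ne _ _ _ _ (Ne.symm hi0), La_set_ne _ _ _ _ (by omega)]
      · -- wt1 w ≥ 2 : need the canonical fix
        have hSne : ((Ones w).erase 0).Nonempty := by
          rw [← Finset.card_pos, Finset.card_erase_of_mem
            (by rw [mem_Ones]; exact ⟨by omega, by rw [hw0]; rfl⟩), ← wt1_eq_card]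
          omega
        set s := ((Ones w).erase 0).min' hSne with hsdef
        have hsmem := Finset.min'_mem _ hSne
        rw [← hsdef] at hsmem
        rw [Finset.mem_erase, mem_Ones] at hsmem
        obtain ⟨hs0, hsn, hs1⟩ := hsmem
        have hspos : 0 < s := by omega
        have hws : La w s = one' := by
          rw [← hp0] at hspos
          exact hpmax s hspos hsn hs1
        have hmin : ∀ i, 0 < i → i < s → isOne (La w i) = false := by
          intro i hi0 his
          rcases hb : isOne (La w i) with _ | _
          · rfl
          · exfalso
            have hmem : i ∈ (Ones w).erase 0 := by
              rw [Finset.mem_erase, mem_Ones]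
              exact ⟨by omega, by omega, hb⟩
            have hle := Finset.min'_le _ _ hmem
            rw [← hsdef] at hle
            omega
        have hv0 : La ((w.set 0 two).set s one) 0 = two := by
          rw [La_set_ne _ _ _ _ (by omega), La_set_eq _ _ _ (by omega)]
        have hvs : La ((w.set 0 two).set s one) s = one := by
          rw [La_set_eq _ _ _ (by rw [List.length_set]; omega)]
        have hvi : ∀ i, i ≠ 0 → i ≠ s → La ((w.set 0 two).set s one) i = La w i := by
          intro i hi0 his
          rw [La_set_ne _ _ _ _ (Ne.symm his), La_set_ne _ _ _ _ (Ne.symm hi0)]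
        have hwt := wt_set_toTwo w 0 two (by omega) (by rw [hw0]; rfl) rfl
        have hwt2 := wt_set_same (w.set 0 two) s one
          (by rw [La_set_ne _ _ _ _ (by omega), hws]; rfl)
        refine ⟨(w.set 0 two).set s one, ?_, ?_, by omega, by omega⟩
        · rw [isCanonical_iff]
          constructor
          · intro j hj hj1 hall
            rw [List.length_set, List.length_set] at hj
            rcases lt_trichotomy j s with h | h | h
            · exfalso
              by_cases hj0 : j = 0
              · subst hj0
                rw [hv0] at hj1
                exact Bool.noConfusion hj1
              · rw [hvi j hj0 (by omega), hmin j (by omega) h] at hj1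
                exact Bool.noConfusion hj1
            · rw [h, hvs]
            · exfalso
              have := hall s h
              rw [hvs] at this
              exact Bool.noConfusion this
          · intro j hj hj2 hall
            rw [List.length_set, List.length_set] at hj
            by_cases hj0 : j = 0
            · rw [hj0, hv0]
            · exfalso
              have := hall 0 (by omega)
              rw [hv0] at this
              exact Bool.noConfusion this
        · rw [stdList_eq_iff_Agr]
          refine ⟨by simp, ?_⟩
          intro i j hij hjn
          rw [List.length_set, List.length_set] at hjn
          have hj0 : j ≠ 0 := by omega
          by_cases hi0 : i = 0
          · subst hi0
            by_cases hjs : j = s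
            · subst hjs
              rw [hv0, hvs, hw0, hws]
              decide
            · rw [hv0, hvi j hj0 hjs, hw0]
              rcases hb : isOne (La w j) with _ | _
              · rw [hA2 j hjn hb]
                decide
              · rw [← hp0] at hij
                rw [hpmax j hij hjn hb]
                decide
          · by_cases his : i = s
            · subst his
              rw [hvs, hvi j hj0 (by omega), hws]
              rcases hlj : La w j with _ | _ | _ | _ <;> decide
            · by_cases hjs : j = s
              · subst hjs
                rw [hvi i hi0 his, hvs, hws]
                have hfi : isOne (La w i) = false := hmin i (by omega) hij
                rcases hli : La w i with _ | _ | _ | _ <;> rw [hli] at hfi <;>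
                  first | rfl | exact Bool.noConfusion hfi
              · rw [hvi i hi0 his, hvi j hj0 hjs]
    · -- 0 < p : simple witness w.set p two
      refine ⟨w.set p two, ?_, ?_, (wt_set_toTwo w p two hpn hp1 rfl).1,
        (wt_set_toTwo w p two hpn hp1 rfl).2⟩
      · rw [isCanonical_iff]
        constructor
        · intro j hj hj1 hall
          rw [List.length_set] at hj
          by_cases hj0 : j = 0
          · subst hj0
            rw [La_set_ne _ _ _ _ (by omega)]
            exact hw0
          · exfalso
            have := hall 0 (by omega)
            rw [La_set_ne _ _ _ _ (by omega), hw0] at this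
            exact Bool.noConfusion this
        · intro j hj hj2 hall
          rw [List.length_set] at hj
          rcases lt_trichotomy j p with h | h | h
          · exfalso
            rw [La_set_ne _ _ _ _ (by omega), hbef2 j (by omega)] at hj2
            exact Bool.noConfusion hj2
          · rw [h, La_set_eq _ _ _ hpn]
          · exfalso
            have := hall p h
            rw [La_set_eq _ _ _ hpn] at this
            exact Bool.noConfusion this
      · rw [stdList_eq_iff_Agr]
        refine ⟨by simp, ?_⟩
        intro i j hij hjn
        rw [List.length_set] at hjn
        by_cases hjp : j = p
        · subst hjp
          rw [La_set_ne _ _ _ _ (by omega), La_set_eq _ _ _ hpn, hwp]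
          have hi1 : isOne (La w i) = true := hbef2 i (by omega)
          rcases hli : La w i with _ | _ | _ | _ <;> rw [hli] at hi1 <;>
            first | rfl | exact Bool.noConfusion hi1
        · by_cases hip : i = p
          · subst hip
            rw [La_set_eq _ _ _ hpn, La_set_ne _ _ _ _ (Ne.symm hjp), hwp]
            rcases hb : isOne (La w j) with _ | _
            · rw [hA2 j hjn hb]
              decide
            · rw [hpmax j hij hjn hb]
              decide
          · rw [La_set_ne _ _ _ _ (Ne.symm hip), La_set_ne _ _ _ _ (Ne.symm hjp)]
  · -- CASE B : t0 < o0, so t0 = 0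
    have ht0z : t0 = 0 := by rcases hzero with h | h <;> omega
    have hw0 : La w 0 = two := ht0z ▸ ht0
    have hB2 : ∀ k, k < w.length → o0 < k → isOne (La w k) = true → La w k = one' := by
      intro k hk hok hk1
      rcases hsh2 k hk hok (by omega) with hh | hh
      · exact hh
      · rw [hh] at hk1; exact Bool.noConfusion hk1
    have hB3 : ∀ k, k < w.length → o0 < k → isOne (La w k) = false → La w k = two := by
      intro k hk hok hk2
      rcases hsh2 k hk hok (by omega) with hh | hh
      · rw [hh] at hk2; exact Bool.noConfusion hk2
      · exact hh
    by_cases ha1 : wt1 w = 1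
    · -- single 1-valued letter at o0
      have honly : ∀ k, k < w.length → k ≠ o0 → isOne (La w k) = false := by
        intro k hk hk0
        rcases hb : isOne (La w k) with _ | _
        · rfl
        · exact absurd (uniqOne w o0 (by rw [mem_Ones]; exact ⟨ho0n, hone_o0⟩) ha1 k hk hb) hk0
      refine ⟨w.set o0 two', ?_, ?_, (wt_set_toTwo w o0 two' ho0n hone_o0 rfl).1,
        (wt_set_toTwo w o0 two' ho0n hone_o0 rfl).2⟩
      · rw [isCanonical_iff]
        constructor
        · intro j hj hj1 _
          exfalso
          rw [List.length_set] at hj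
          by_cases hjo : j = o0
          · subst hjo
            rw [La_set_eq _ _ _ ho0n] at hj1
            exact Bool.noConfusion hj1
          · rw [La_set_ne _ _ _ _ (Ne.symm hjo), honly j hj hjo] at hj1
            exact Bool.noConfusion hj1
        · intro j hj hj2 hall
          rw [List.length_set] at hj
          by_cases hj0 : j = 0
          · subst hj0
            rw [La_set_ne _ _ _ _ (by omega), hw0]
          · exfalso
            have := hall 0 (by omega)
            rw [La_set_ne _ _ _ _ (by omega), hw0] at this
            exact Bool.noConfusion this
      · rw [stdList_eq_iff_Agr]
        refine ⟨by simp, ?_⟩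
        intro i j hij hjn
        rw [List.length_set] at hjn
        by_cases hjo : j = o0
        · subst hjo
          rw [La_set_ne _ _ _ _ (by omega), La_set_eq _ _ _ ho0n, ho0]
          have hfi : isOne (La w i) = false := hbef1 i hij
          rcases hli : La w i with _ | _ | _ | _ <;> rw [hli] at hfi <;>
            first | rfl | exact Bool.noConfusion hfi
        · by_cases hio : i = o0
          · subst hio
            rw [La_set_eq _ _ _ ho0n, La_set_ne _ _ _ _ (Ne.symm hjo), ho0,
              hB3 j hjn hij (honly j hjn hjo)]
            decide
          · rw [La_set_ne _ _ _ _ (Ne.symm hio), La_set_ne _ _ _ _ (Ne.symm hjo)]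
    · -- wt1 w ≥ 2
      have hSne : ((Ones w).erase o0).Nonempty := by
        rw [← Finset.card_pos, Finset.card_erase_of_mem
          (by rw [mem_Ones]; exact ⟨ho0n, hone_o0⟩), ← wt1_eq_card]
        omega
      set s := ((Ones w).erase o0).min' hSne with hsdef
      have hsmem := Finset.min'_mem _ hSne
      rw [← hsdef] at hsmem
      rw [Finset.mem_erase, mem_Ones] at hsmem
      obtain ⟨hso, hsn, hs1⟩ := hsmem
      have hsgt : o0 < s := by
        rcases lt_trichotomy s o0 with h | h | h
        · exfalso; rw [hbef1 s h] at hs1; exact Bool.noConfusion hs1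
        · exact absurd h hso
        · exact h
      have hws : La w s = one' := hB2 s hsn hsgt hs1
      have hmid : ∀ i, o0 < i → i < s → isOne (La w i) = false := by
        intro i hio his
        rcases hb : isOne (La w i) with _ | _
        · rfl
        · exfalso
          have hmem : i ∈ (Ones w).erase o0 := by
            rw [Finset.mem_erase, mem_Ones]
            exact ⟨by omega, by omega, hb⟩
          have hle := Finset.min'_le _ _ hmem
          rw [← hsdef] at hle
          omega
      have hvo : La ((w.set o0 two').set s one) o0 = two' := by
        rw [La_set_ne _ _ _ _ (by omega), La_set_eq _ _ _ ho0n]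
      have hvs : La ((w.set o0 two').set s one) s = one := by
        rw [La_set_eq _ _ _ (by rw [List.length_set]; omega)]
      have hvi : ∀ i, i ≠ o0 → i ≠ s → La ((w.set o0 two').set s one) i = La w i := by
        intro i hio his
        rw [La_set_ne _ _ _ _ (Ne.symm his), La_set_ne _ _ _ _ (Ne.symm hio)]
      have hwt := wt_set_toTwo w o0 two' ho0n hone_o0 rfl
      have hwt2 := wt_set_same (w.set o0 two') s one
        (by rw [La_set_ne _ _ _ _ (by omega), hws]; rfl)
      refine ⟨(w.set o0 two').set s one, ?_, ?_, by omega, by omega⟩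
      · rw [isCanonical_iff]
        constructor
        · intro j hj hj1 hall
          rw [List.length_set, List.length_set] at hj
          rcases lt_trichotomy j s with h | h | h
          · exfalso
            by_cases hjo : j = o0
            · subst hjo
              rw [hvo] at hj1
              exact Bool.noConfusion hj1
            · rw [hvi j hjo (by omega)] at hj1
              rcases lt_trichotomy j o0 with h2 | h2 | h2
              · rw [hbef1 j h2] at hj1; exact Bool.noConfusion hj1
              · exact hjo h2
              · rw [hmid j h2 h] at hj1; exact Bool.noConfusion hj1
          · rw [h, hvs]
          · exfalso
            have := hall s h
            rw [hvs] at this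
            exact Bool.noConfusion this
        · intro j hj hj2 hall
          rw [List.length_set, List.length_set] at hj
          by_cases hj0 : j = 0
          · rw [hj0, hvi 0 (by omega) (by omega), hw0]
          · exfalso
            have := hall 0 (by omega)
            rw [hvi 0 (by omega) (by omega), hw0] at this
            exact Bool.noConfusion this
      · rw [stdList_eq_iff_Agr]
        refine ⟨by simp, ?_⟩
        intro i j hij hjn
        rw [List.length_set, List.length_set] at hjn
        by_cases hio : i = o0
        · subst hio
          by_cases hjs : j = s
          · subst hjs
            rw [hvo, hvs, ho0, hws]
            decide
          · rw [hvo, hvi j (by omega) hjs, ho0]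
            rcases hb : isOne (La w j) with _ | _
            · rw [hB3 j hjn hij hb]
              decide
            · rw [hB2 j hjn hij hb]
              decide
        · by_cases his : i = s
          · subst his
            rw [hvs, hvi j (by omega) (by omega), hws]
            rcases hlj : La w j with _ | _ | _ | _ <;> decide
          · by_cases hjo : j = o0
            · subst hjo
              rw [hvi i hio (by omega), hvo, ho0]
              have hfi : isOne (La w i) = false := hbef1 i hij
              rcases hli : La w i with _ | _ | _ | _ <;> rw [hli] at hfi <;>
                first | rfl | exact Bool.noConfusion hfi
            · by_cases hjs : j = s
              · subst hjs
                rw [hvi i hio his, hvs, hws]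
                have hfi : isOne (La w i) = false := by
                  rcases lt_trichotomy i o0 with h2 | h2 | h2
                  · exact hbef1 i h2
                  · exact absurd h2 hio
                  · exact hmid i h2 hij
                rcases hli : La w i with _ | _ | _ | _ <;> rw [hli] at hfi <;>
                  first | rfl | exact Bool.noConfusion hfi
              · rw [hvi i hio his, hvi j hjo hjs]
end Aux6b
section Aux6c

lemma construct_E (w : List SLetter) (hc : IsCanonical w) (hs : ShapeP w)
    (h1 : 1 ≤ wt1 w) (h2 : 1 ≤ wt2 w) :
    ∃ u, IsCanonical u ∧ stdList u = stdList w ∧ wt1 u = wt1 w + 1 ∧ wt2 u + 1 = wt2 w := by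
  have hone : (Ones w).Nonempty := by
    rw [← Finset.card_pos, ← wt1_eq_card]; omega
  have htwo : (Twos w).Nonempty := by
    rw [← Finset.card_pos, ← wt2_eq_card]; omega
  obtain ⟨o0, t0, ho0n, ht0n, ho0, ht0, hbef1, hbef2, hsh2, hzero⟩ :=
    normal_form w hc hs hone htwo
  have hone_o0 : isOne (La w o0) = true := by rw [ho0]; rfl
  have htwo_t0 : isOne (La w t0) = false := by rw [ht0]; rfl
  have hne : o0 ≠ t0 := fun he => by rw [he, htwo_t0] at hone_o0; exact Bool.noConfusion hone_o0
  rcases lt_or_gt_of_ne hne with hA | hB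
  · -- CASE A : o0 = 0 < t0 ; witness w.set t0 one
    have ho0z : o0 = 0 := by rcases hzero with h | h <;> omega
    have hw0 : La w 0 = one := ho0z ▸ ho0
    have hA2 : ∀ k, k < w.length → t0 < k → isOne (La w k) = false → La w k = two := by
      intro k hk hkt hk2
      rcases hsh2 k hk (by omega) hkt with hh | hh
      · rw [hh] at hk2; exact Bool.noConfusion hk2
      · exact hh
    have hA3 : ∀ k, k < w.length → t0 < k → isOne (La w k) = true → La w k = one' := by
      intro k hk hkt hk1
      rcases hsh2 k hk (by omega) hkt with hh | hh
      · exact hh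
      · rw [hh] at hk1; exact Bool.noConfusion hk1
    refine ⟨w.set t0 one, ?_, ?_, (wt_set_toOne w t0 one ht0n htwo_t0 rfl).1,
      (wt_set_toOne w t0 one ht0n htwo_t0 rfl).2⟩
    · rw [isCanonical_iff]
      constructor
      · intro j hj hj1 hall
        rw [List.length_set] at hj
        by_cases hj0 : j = 0
        · subst hj0
          rw [La_set_ne _ _ _ _ (by omega)]
          exact hw0
        · exfalso
          have := hall 0 (by omega)
          rw [La_set_ne _ _ _ _ (by omega), hw0] at this
          exact Bool.noConfusion this
      · intro j hj hj2 hall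
        rw [List.length_set] at hj
        rcases lt_trichotomy j t0 with h | h | h
        · exfalso
          rw [La_set_ne _ _ _ _ (by omega), hbef2 j h] at hj2
          exact Bool.noConfusion hj2
        · exfalso
          rw [h, La_set_eq _ _ _ ht0n] at hj2
          exact Bool.noConfusion hj2
        · rw [La_set_ne _ _ _ _ (by omega)] at hj2 ⊢
          exact hA2 j hj h hj2
    · rw [stdList_eq_iff_Agr]
      refine ⟨by simp, ?_⟩
      intro i j hij hjn
      rw [List.length_set] at hjn
      by_cases hjt : j = t0
      · subst hjt
        rw [La_set_ne _ _ _ _ (by omega), La_set_eq _ _ _ ht0n, ht0]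
        have hi1 : isOne (La w i) = true := hbef2 i hij
        rcases hli : La w i with _ | _ | _ | _ <;> rw [hli] at hi1 <;>
          first | rfl | exact Bool.noConfusion hi1
      · by_cases hit : i = t0
        · subst hit
          rw [La_set_eq _ _ _ ht0n, La_set_ne _ _ _ _ (Ne.symm hjt), ht0]
          rcases hb : isOne (La w j) with _ | _
          · rw [hA2 j hjn hij hb]
            decide
          · rw [hA3 j hjn hij hb]
            decide
        · rw [La_set_ne _ _ _ _ (Ne.symm hit), La_set_ne _ _ _ _ (Ne.symm hjt)]
  · -- CASE B : t0 = 0 < o0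
    have ht0z : t0 = 0 := by rcases hzero with h | h <;> omega
    have hw0 : La w 0 = two := ht0z ▸ ht0
    have hB2 : ∀ k, k < w.length → o0 < k → isOne (La w k) = true → La w k = one' := by
      intro k hk hok hk1
      rcases hsh2 k hk hok (by omega) with hh | hh
      · exact hh
      · rw [hh] at hk1; exact Bool.noConfusion hk1
    have hB3 : ∀ k, k < w.length → o0 < k → isOne (La w k) = false → La w k = two := by
      intro k hk hok hk2
      rcases hsh2 k hk hok (by omega) with hh | hh
      · rw [hh] at hk2; exact Bool.noConfusion hk2
      · exact hh
    have hB4 : ∀ k, k < w.length → La w k = two' → 0 < k ∧ k < o0 := by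
      intro k hk hk2
      have hk2' : isOne (La w k) = false := by rw [hk2]; rfl
      have hkz : k ≠ 0 := fun he => by rw [he, hw0] at hk2; exact SLetter.noConfusion hk2
      have hko : k ≠ o0 := fun he => by rw [he, ho0] at hk2; exact SLetter.noConfusion hk2
      refine ⟨by omega, ?_⟩
      rcases lt_trichotomy k o0 with h | h | h
      · exact h
      · exact absurd h hko
      · exfalso
        rw [hB3 k hk h hk2'] at hk2
        exact SLetter.noConfusion hk2
    by_cases hP2 : ((Finset.range w.length).filter (fun i => La w i = two')).Nonempty
    · -- there is a primed two: q = rightmost two'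
      set q := ((Finset.range w.length).filter (fun i => La w i = two')).max' hP2 with hqdef
      have hqmem := Finset.max'_mem _ hP2
      rw [← hqdef, Finset.mem_filter, Finset.mem_range] at hqmem
      obtain ⟨hqn, hq2⟩ := hqmem
      have hq2' : isOne (La w q) = false := by rw [hq2]; rfl
      obtain ⟨hq0, hqo⟩ := hB4 q hqn hq2
      have hqmax : ∀ k, q < k → k < w.length → La w k ≠ two' := by
        intro k hqk hk hk2
        have hmem : k ∈ (Finset.range w.length).filter (fun i => La w i = two') := by
          rw [Finset.mem_filter, Finset.mem_range]
          exact ⟨hk, hk2⟩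
        have hle := Finset.le_max' _ k hmem
        rw [← hqdef] at hle
        omega
      have hmid2 : ∀ k, k < w.length → isOne (La w k) = false → k ≠ q → q < k → k ≠ o0 →
          La w k = two := by
        intro k hk hk2 hkq hqk hko
        rcases hlk : La w k with _ | _ | _ | _
        · rw [hlk] at hk2; exact Bool.noConfusion hk2
        · rw [hlk] at hk2; exact Bool.noConfusion hk2
        · exact absurd hlk (hqmax k hqk hk)
        · rfl
      have huq : La ((w.set q one).set o0 one') q = one := by
        rw [La_set_ne _ _ _ _ (by omega), La_set_eq _ _ _ hqn]
      have huo : La ((w.set q one).set o0 one') o0 = one' := by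
        rw [La_set_eq _ _ _ (by rw [List.length_set]; omega)]
      have hui : ∀ i, i ≠ q → i ≠ o0 → La ((w.set q one).set o0 one') i = La w i := by
        intro i hiq hio
        rw [La_set_ne _ _ _ _ (Ne.symm hio), La_set_ne _ _ _ _ (Ne.symm hiq)]
      have hwt := wt_set_toOne w q one hqn hq2' rfl
      have hwt2 := wt_set_same (w.set q one) o0 one'
        (by rw [La_set_ne _ _ _ _ (by omega), ho0]; rfl)
      refine ⟨(w.set q one).set o0 one', ?_, ?_, by omega, by omega⟩
      · rw [isCanonical_iff]
        constructor
        · intro j hj hj1 hall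
          rw [List.length_set, List.length_set] at hj
          rcases lt_trichotomy j q with h | h | h
          · exfalso
            rw [hui j (by omega) (by omega), hbef1 j (by omega)] at hj1
            exact Bool.noConfusion hj1
          · rw [h, huq]
          · exfalso
            have := hall q h
            rw [huq] at this
            exact Bool.noConfusion this
        · intro j hj hj2 hall
          rw [List.length_set, List.length_set] at hj
          by_cases hj0 : j = 0
          · rw [hj0, hui 0 (by omega) (by omega), hw0]
          · exfalso
            have := hall 0 (by omega)
            rw [hui 0 (by omega) (by omega), hw0] at this
            exact Bool.noConfusion this
      · rw [stdList_eq_iff_Agr]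
        refine ⟨by simp, ?_⟩
        intro i j hij hjn
        rw [List.length_set, List.length_set] at hjn
        by_cases hiq : i = q
        · subst hiq
          by_cases hjo : j = o0
          · subst hjo
            rw [huq, huo, hq2, ho0]
            decide
          · rw [huq, hui j (by omega) hjo, hq2]
            rcases hb : isOne (La w j) with _ | _
            · rw [hmid2 j hjn hb (by omega) hij hjo]
              decide
            · have hjgto : o0 < j := by
                rcases lt_trichotomy j o0 with h | h | h
                · exfalso; rw [hbef1 j h] at hb; exact Bool.noConfusion hb
                · exact absurd h hjo
                · exact h
              rw [hB2 j hjn hjgto hb]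
              decide
        · by_cases hio : i = o0
          · subst hio
            rw [huo, hui j (by omega) (by omega)]
            rcases hlj : La w j with _ | _ | _ | _ <;> rw [ho0] <;> decide
          · by_cases hjq : j = q
            · subst hjq
              rw [hui i hiq hio, huq, hq2]
              have hfi : isOne (La w i) = false := hbef1 i (by omega)
              rcases hli : La w i with _ | _ | _ | _ <;> rw [hli] at hfi <;>
                first | rfl | exact Bool.noConfusion hfi
            · by_cases hjo : j = o0
              · subst hjo
                rw [hui i hiq hio, huo, ho0]
                have hfi : isOne (La w i) = false := hbef1 i hij
                rcases hli : La w i with _ | _ | _ | _ <;> rw [hli] at hfi <;>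
                  first | rfl | exact Bool.noConfusion hfi
              · rw [hui i hiq hio, hui j hjq hjo]
    · -- no primed two : q = 0
      have hno2 : ∀ k, k < w.length → La w k ≠ two' := by
        intro k hk hk2
        exact hP2 ⟨k, by rw [Finset.mem_filter, Finset.mem_range]; exact ⟨hk, hk2⟩⟩
      have htwoval : ∀ k, k < w.length → isOne (La w k) = false → La w k = two := by
        intro k hk hk2
        rcases hlk : La w k with _ | _ | _ | _
        · rw [hlk] at hk2; exact Bool.noConfusion hk2
        · rw [hlk] at hk2; exact Bool.noConfusion hk2
        · exact absurd hlk (hno2 k hk)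
        · rfl
      have hu0 : La ((w.set 0 one).set o0 one') 0 = one := by
        rw [La_set_ne _ _ _ _ (by omega), La_set_eq _ _ _ (by omega)]
      have huo : La ((w.set 0 one).set o0 one') o0 = one' := by
        rw [La_set_eq _ _ _ (by rw [List.length_set]; omega)]
      have hui : ∀ i, i ≠ 0 → i ≠ o0 → La ((w.set 0 one).set o0 one') i = La w i := by
        intro i hiq hio
        rw [La_set_ne _ _ _ _ (Ne.symm hio), La_set_ne _ _ _ _ (Ne.symm hiq)]
      have hwt := wt_set_toOne w 0 one (by omega) (by rw [hw0]; rfl) rfl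
      have hwt2 := wt_set_same (w.set 0 one) o0 one'
        (by rw [La_set_ne _ _ _ _ (by omega), ho0]; rfl)
      refine ⟨(w.set 0 one).set o0 one', ?_, ?_, by omega, by omega⟩
      · rw [isCanonical_iff]
        constructor
        · intro j hj hj1 hall
          rw [List.length_set, List.length_set] at hj
          by_cases hj0 : j = 0
          · rw [hj0, hu0]
          · exfalso
            have := hall 0 (by omega)
            rw [hu0] at this
            exact Bool.noConfusion this
        · intro j hj hj2 hall
          rw [List.length_set, List.length_set] at hj
          have hj0 : j ≠ 0 := by
            intro he
            rw [he, hu0] at hj2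
            exact Bool.noConfusion hj2
          have hjo : j ≠ o0 := by
            intro he
            rw [he, huo] at hj2
            exact Bool.noConfusion hj2
          rw [hui j hj0 hjo] at hj2 ⊢
          exact htwoval j hj hj2
      · rw [stdList_eq_iff_Agr]
        refine ⟨by simp, ?_⟩
        intro i j hij hjn
        rw [List.length_set, List.length_set] at hjn
        by_cases hi0 : i = 0
        · subst hi0
          by_cases hjo : j = o0
          · subst hjo
            rw [hu0, huo, hw0, ho0]
            decide
          · rw [hu0, hui j (by omega) hjo, hw0]
            rcases hb : isOne (La w j) with _ | _
            · rw [htwoval j hjn hb]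
              decide
            · have hjgto : o0 < j := by
                rcases lt_trichotomy j o0 with h | h | h
                · exfalso; rw [hbef1 j h] at hb; exact Bool.noConfusion hb
                · exact absurd h hjo
                · exact h
              rw [hB2 j hjn hjgto hb]
              decide
        · by_cases hio : i = o0
          · subst hio
            rw [huo, hui j (by omega) (by omega)]
            rcases hlj : La w j with _ | _ | _ | _ <;> rw [ho0] <;> decide
          · by_cases hjo : j = o0
            · subst hjo
              rw [hui i hi0 hio, huo, ho0]
              have hfi : isOne (La w i) = false := hbef1 i hij
              rcases hli : La w i with _ | _ | _ | _ <;> rw [hli] at hfi <;>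
                first | rfl | exact Bool.noConfusion hfi
            · rw [hui i hi0 hio, hui j (by omega) hjo]

end Aux6c

/-- For a word `w` with at least one `1`-valued and one `2`-valued letter, the maximal
`F'`-chain through `w` has length greater than `1` (i.e. at least two edges occur in the
chain `…, E'(w), w, F'(w), …`) if and only if the lattice walk of `w` contains no south
or west steps. -/
theorem stmt_13 (w : List SLetter) (hw : IsCanonical w)
    (h1 : 1 ≤ wt1 w) (h2 : 1 ≤ wt2 w) :
    ((∃ v, Fprime w = some v ∧ (Fprime v).isSome) ∨
     (∃ v, Eprime w = some v ∧ (Eprime v).isSome) ∨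
     ((Fprime w).isSome ∧ (Eprime w).isSome)) ↔
      ∀ i < w.length, stepAt w i = (1, 0) ∨ stepAt w i = (0, 1) := by
  rw [steps_iff_shape]
  constructor
  · rintro (⟨v, hfv, hfvs⟩ | ⟨v, hev, hevs⟩ | ⟨hf, he⟩)
    · obtain ⟨hcv, hstd, hw1, hw2⟩ := Fprime_eq_some w v hfv
      obtain ⟨v2, hcv2, hstd2, hw12, hw22⟩ := (Fprime_isSome_iff v).1 hfvs
      have hAwv : Agr w v := (stdList_eq_iff_Agr w v).1 hstd.symm
      have hAvv2 : Agr v v2 := (stdList_eq_iff_Agr v v2).1 hstd2.symm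
      have hmid : ShapeP v := middle_shape w v v2 hAwv hAvv2 hcv (by omega) (by omega)
      exact transfer_up w v hAwv (by omega) hmid
    · obtain ⟨hcv, hstd, hw1, hw2⟩ := Eprime_eq_some w v hev
      obtain ⟨u2, hcu2, hstd2, hw12, hw22⟩ := (Eprime_isSome_iff v).1 hevs
      have hA1 : Agr u2 v := (stdList_eq_iff_Agr u2 v).1 hstd2
      have hA2 : Agr v w := (stdList_eq_iff_Agr v w).1 hstd
      have hmid : ShapeP v := middle_shape u2 v w hA1 hA2 hcv (by omega) (by omega)
      exact transfer_down v w hA2 (by omega) hmid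
    · obtain ⟨v, hcv, hstd, hw1, hw2⟩ := (Fprime_isSome_iff w).1 hf
      obtain ⟨u, hcu, hstdu, hw1u, hw2u⟩ := (Eprime_isSome_iff w).1 he
      have hA1 : Agr u w := (stdList_eq_iff_Agr u w).1 hstdu
      have hA2 : Agr w v := (stdList_eq_iff_Agr w v).1 hstd.symm
      exact middle_shape u w v hA1 hA2 hw (by omega) (by omega)
  · intro hsh
    right; right
    exact ⟨(Fprime_isSome_iff w).2 (construct_F w hw hsh h1 h2),
      (Eprime_isSome_iff w).2 (construct_E w hw hsh h1 h2)⟩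
end

section
/- Let P be a finite connected poset in which any two distinct elements y_1, y_2 covering a common element z have a common upper bound. Then P has a unique maximal element. -/
/-- A finite connected poset in which any two distinct elements covering a common element
have a common upper bound has a unique maximal element. -/
theorem stmt_18 {P : Type*} [PartialOrder P] [Finite P] [Nonempty P]
    (hconn : ∀ a b : P, Relation.ReflTransGen (fun x y : P => x ≤ y ∨ y ≤ x) a b)
    (hcov : ∀ y₁ y₂ z : P, y₁ ≠ y₂ → z ⋖ y₁ → z ⋖ y₂ → ∃ u, y₁ ≤ u ∧ y₂ ≤ u) :
    ∃! m : P, IsMax m := by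
  -- Confluence: any two elements above a common element have a common upper bound.
  have hconf : ∀ z y₁ y₂ : P, z ≤ y₁ → z ≤ y₂ → ∃ u, y₁ ≤ u ∧ y₂ ≤ u := by
    intro z
    induction z using WellFoundedGT.induction with
    | _ z IH =>
      intro y₁ y₂ h1 h2
      rcases eq_or_lt_of_le h1 with rfl | h1
      · exact ⟨y₂, h2, le_rfl⟩
      rcases eq_or_lt_of_le h2 with rfl | h2
      · exact ⟨y₁, le_rfl, h1.le⟩
      obtain ⟨a₁, ha₁, ha₁le⟩ := exists_covBy_le_of_lt h1
      obtain ⟨a₂, ha₂, ha₂le⟩ := exists_covBy_le_of_lt h2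
      rcases eq_or_ne a₁ a₂ with rfl | hne
      · exact IH a₁ ha₁.lt _ _ ha₁le ha₂le
      obtain ⟨u, hu₁, hu₂⟩ := hcov a₁ a₂ z hne ha₁ ha₂
      obtain ⟨v, hv₁, hv₂⟩ := IH a₁ ha₁.lt _ _ ha₁le hu₁
      obtain ⟨w, hw₁, hw₂⟩ := IH a₂ ha₂.lt _ _ ha₂le (hu₂.trans hv₂)
      exact ⟨w, hv₁.trans hw₂, hw₁⟩
  -- Joinability is transitive along comparability paths.
  have hjoin : ∀ a b : P, ∃ u, a ≤ u ∧ b ≤ u := by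
    intro a b
    induction hconn a b with
    | refl => exact ⟨a, le_rfl, le_rfl⟩
    | tail _ hcd IH =>
      obtain ⟨u, hau, hcu⟩ := IH
      rcases hcd with h | h
      · obtain ⟨v, huv, hdv⟩ := hconf _ u _ hcu h
        exact ⟨v, hau.trans huv, hdv⟩
      · exact ⟨u, hau, h.trans hcu⟩
  -- Existence of a maximal element.
  obtain ⟨m, hm⟩ : ∃ m : P, IsMax m := by
    obtain ⟨a⟩ := ‹Nonempty P›
    clear hconn hcov hconf hjoin
    induction a using WellFoundedGT.induction with
    | _ a IH =>
      by_cases ha : IsMax a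
      · exact ⟨a, ha⟩
      · obtain ⟨b, hb⟩ := not_isMax_iff.mp ha
        exact IH b hb
  refine ⟨m, hm, fun m' hm' => ?_⟩
  obtain ⟨u, h1, h2⟩ := hjoin m' m
  rw [hm'.eq_of_le h1, hm.eq_of_le h2]
end
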